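/- arXiv:2511.15962 — 8 statements merged into one kernel-verified Lean document; each statement's English description precedes it below -/
import Mathlib

section
/- Let R be a commutative unital ring and let Q, S, Q', S' ∈ R[T] be monic polynomials with deg(Q) = deg(Q'), deg(S) = deg(S'), Q·S = Q'·S', and such that each of the pairs (Q,S), (Q',S), (Q,S'), (Q',S') generates the unit ideal of R[T]. Then Q = Q' and S = S'. -/
/-- Let `R` be a commutative unital ring and `Q, S, Q', S' ∈ R[T]` monic
polynomials with `deg Q = deg Q'`, `deg S = deg S'`, `Q·S = Q'·S'`, such that each of the
pairs `(Q,S)`, `(Q',S)`, `(Q,S')`, `(Q',S')` generates the unit ideal of `R[T]`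
(i.e. is coprime).  Then `Q = Q'` and `S = S'`. -/
theorem stmt0 {R : Type*} [CommRing R] (Q S Q' S' : Polynomial R)
    (hQ : Q.Monic) (hS : S.Monic) (hQ' : Q'.Monic) (hS' : S'.Monic)
    (hdegQ : Q.degree = Q'.degree) (hdegS : S.degree = S'.degree)
    (hprod : Q * S = Q' * S')
    (h1 : IsCoprime Q S) (h2 : IsCoprime Q' S) (h3 : IsCoprime Q S')
    (h4 : IsCoprime Q' S') :
    Q = Q' ∧ S = S' := by
  have hdvd : Q' ∣ Q := h2.dvd_of_dvd_mul_right ⟨S', hprod⟩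
  have hQQ' : Q = Q' :=
    Polynomial.eq_of_monic_of_dvd_of_natDegree_le hQ' hQ hdvd
      (Polynomial.natDegree_le_natDegree hdegQ.le)
  refine ⟨hQQ', ?_⟩
  subst hQQ'
  exact hQ'.isRegular.left (by simpa using hprod)
end

section
/- Let k be a field of characteristic 0 and let Q, S, Q', S' ∈ k[T] be monic polynomials satisfying Q(T)·S(T) = Q'(T)·S'(T), Q(T−1)·S(T) = Q'(T−1)·S'(T), and gcd(Q, S) = 1. Then Q = Q' and S = S'. -/
/-!
Eliminating `S` and `S'` gives `Q · Q'(T-1) = Q' · Q(T-1)`. Write `Q = d·A`, `Q' = d·B` with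
`d = gcd(Q, Q')` and `A`, `B` coprime monic; then `A · B(T-1) = B · A(T-1)`, so `A` divides
`A(T-1)`, a monic polynomial of the same degree, hence `A(T-1) = A`. In characteristic zero a
polynomial invariant under `T ↦ T - 1` takes the same value at every natural number, so it is
constant; thus `A = 1`, likewise `B = 1`, and `Q = Q'`.
-/

open Polynomial

section CharZeroDomain

variable {R : Type*} [CommRing R] [IsDomain R] [CharZero R]

theorem eq_C_eval_zero_of_comp_X_sub_one_eq {A : R[X]} (h : A.comp (X - 1) = A) :
    A = C (A.eval 0) := by
  have eval_succ (n : ℕ) : A.eval ((n + 1 : ℕ) : R) = A.eval (n : R) := by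
    conv_lhs => rw [← h]
    simp
  have eval_nat (n : ℕ) : A.eval (n : R) = A.eval 0 := by
    induction n with
    | zero => simp
    | succ n ih => rw [eval_succ, ih]
  refine sub_eq_zero.mp (eq_zero_of_infinite_isRoot _ ?_)
  refine Set.Infinite.mono ?_ (Set.infinite_range_of_injective (Nat.cast_injective (R := R)))
  rintro _ ⟨n, rfl⟩
  simp [eval_nat]

theorem Polynomial.Monic.eq_one_of_comp_X_sub_one_eq {A : R[X]} (hA : A.Monic)
    (h : A.comp (X - 1) = A) : A = 1 := by
  have hdeg : A.natDegree = 0 := by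
    rw [eq_C_eval_zero_of_comp_X_sub_one_eq h, natDegree_C]
  exact eq_one_of_monic_natDegree_zero hA hdeg

theorem Polynomial.Monic.eq_one_of_dvd_comp_X_sub_one {A : R[X]} (hA : A.Monic)
    (hdvd : A ∣ A.comp (X - 1)) : A = 1 := by
  have hshift_monic : (A.comp (X - 1)).Monic := by
    simpa using hA.comp_X_sub_C 1
  have hshift_deg : (A.comp (X - 1)).natDegree = A.natDegree := by
    rw [natDegree_comp, ← C_1, natDegree_X_sub_C, mul_one]
  exact hA.eq_one_of_comp_X_sub_one_eq
    (eq_of_monic_of_dvd_of_natDegree_le hA hshift_monic hdvd hshift_deg.le)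

end CharZeroDomain

theorem Polynomial.Monic.eq_of_mul_comp_X_sub_one_eq {k : Type*} [Field k] [CharZero k]
    {Q Q' : k[X]} (hQ : Q.Monic) (hQ' : Q'.Monic)
    (h : Q * Q'.comp (X - 1) = Q' * Q.comp (X - 1)) : Q = Q' := by
  classical
  obtain ⟨A, B, hQA, hQ'B, hAB⟩ := extract_gcd Q Q'
  set d := gcd Q Q'
  have hd : d.Monic := by
    simpa [d, normalize_gcd] using monic_normalize (gcd_ne_zero_of_left hQ.ne_zero)
  have hA : A.Monic := hd.of_mul_monic_left (hQA ▸ hQ)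
  have hB : B.Monic := hd.of_mul_monic_left (hQ'B ▸ hQ')
  have hdd : d * d.comp (X - 1) ≠ 0 :=
    mul_ne_zero hd.ne_zero (by simpa using (hd.comp_X_sub_C 1).ne_zero)
  have hAB_shift : A * B.comp (X - 1) = B * A.comp (X - 1) := by
    refine mul_left_cancel₀ hdd ?_
    rw [hQA, hQ'B, mul_comp, mul_comp] at h
    linear_combination h
  have hcop : IsRelPrime A B := gcd_isUnit_iff_isRelPrime.mp hAB
  have hA1 : A = 1 := hA.eq_one_of_dvd_comp_X_sub_one
    (hcop.dvd_of_dvd_mul_left ⟨B.comp (X - 1), hAB_shift.symm⟩)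
  have hB1 : B = 1 := hB.eq_one_of_dvd_comp_X_sub_one
    (hcop.symm.dvd_of_dvd_mul_left ⟨A.comp (X - 1), hAB_shift⟩)
  rw [hQA, hQ'B, hA1, hB1]

theorem stmt1_general {k : Type*} [Field k] [CharZero k] (Q S Q' S' : Polynomial k)
    (hQ : Q.Monic) (hQ' : Q'.Monic) (hS' : S'.Monic)
    (hprod : Q * S = Q' * S')
    (hshift : Q.comp (Polynomial.X - 1) * S = Q'.comp (Polynomial.X - 1) * S') :
    Q = Q' ∧ S = S' := by
  have hcross : Q * Q'.comp (X - 1) = Q' * Q.comp (X - 1) := by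
    refine mul_right_cancel₀ hS'.ne_zero ?_
    linear_combination Q * hshift.symm + Q.comp (X - 1) * hprod
  have hQQ' : Q = Q' := hQ.eq_of_mul_comp_X_sub_one_eq hQ' hcross
  subst hQQ'
  exact ⟨rfl, mul_left_cancel₀ hQ.ne_zero hprod⟩

/-- Let `k` be a field of characteristic `0` and `Q, S, Q', S' ∈ k[T]`
monic polynomials with `Q(T)·S(T) = Q'(T)·S'(T)`, `Q(T−1)·S(T) = Q'(T−1)·S'(T)` and
`gcd(Q,S) = 1` (i.e. `Q` and `S` are coprime).  Then `Q = Q'` and `S = S'`. -/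
theorem stmt1 {k : Type*} [Field k] [CharZero k] (Q S Q' S' : Polynomial k)
    (hQ : Q.Monic) (hS : S.Monic) (hQ' : Q'.Monic) (hS' : S'.Monic)
    (hprod : Q * S = Q' * S')
    (hshift : Q.comp (Polynomial.X - 1) * S = Q'.comp (Polynomial.X - 1) * S')
    (hco : IsCoprime Q S) :
    Q = Q' ∧ S = S' :=
  stmt1_general Q S Q' S' hQ hQ' hS' hprod hshift
end

section
/- Let V be an n-dimensional vector space over a field E with basis e₁, …, eₙ, equipped with an exhaustive decreasing filtration (Filⁱ V)_{i∈ℤ} with exactly n jumps h₁ < … < hₙ, each of multiplicity one (i.e. dim(Fil^{h_i} V / Fil^{h_i+1} V) = 1 for all i). For w ∈ S_n and 1 ≤ i ≤ n let V_i^w = span(e_{w(1)}, …, e_{w(i)}), and let j_i(w) be the unique jump of the filtration induced on the line V_i^w / V_{i-1}^w. If (j₁(w), …, jₙ(w)) ≠ (h₁, …, hₙ), then there exists i ∈ {1, …, n−1} such that the sequence (j_k(w∘(i,i+1)))_k is obtained from (j_k(w))_k by swapping the entries in positions i and i+1, and leaving all other entries unchanged. -/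
/-!
The jump of the filtration induced on a line `B / A` is a lattice-theoretic notion: it is the `m`
with `¬ Fil m ⊓ B ≤ A` and `Fil (m + 1) ⊓ B ≤ A`. Swapping the basis vectors in positions `i` and
`i + 1` changes only the middle term of the chain `V_{i-1} ≤ V_i ≤ V_{i+1}`, and if the jumps `b`
of `V_i / V_{i-1}` and `a` of `V_{i+1} / V_i` satisfy `a ≤ b`, the modular law shows that the two
new subquotients carry `a` and `b` in that order. Multiplicity one makes the jumps `j_k(w)`
pairwise distinct, so they are a rearrangement of `h₁ < … < hₙ`; if they are not increasing, some
adjacent pair is an inversion.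
-/

open Function Submodule

theorem exists_adjacent_inversion {β : Type*} [LinearOrder β] {n : ℕ} {f g : Fin n → β}
    (hg : StrictMono g) (hf : Injective f) (hfg : ∀ k, f k ∈ Set.range g) (hne : f ≠ g) :
    ∃ i i' : Fin n, (i' : ℕ) = i + 1 ∧ f i' < f i := by
  by_contra! hcon
  obtain _ | n := n
  · exact hne (funext fun k => k.elim0)
  have hfmono : StrictMono f := Fin.strictMono_iff_lt_succ.2 fun q =>
    (hcon q.castSucc q.succ rfl).lt_of_ne (hf.ne (Fin.castSucc_lt_succ (i := q)).ne)
  choose φ hφ using hfg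
  have hφmono : StrictMono φ := fun k l hkl => hg.lt_iff_lt.1 (by rw [hφ, hφ]; exact hfmono hkl)
  exact hne (funext fun k => by rw [← hφ, hφmono.apply_eq])

section InducedJump

variable {α : Type*} [Lattice α]

/-- `F m ⊓ B ⊔ A` is the preimage in `B` of the `m`-th step of the filtration induced on `B / A`. -/
def IsInducedJump (F : ℤ → α) (A B : α) (m : ℤ) : Prop :=
  F m ⊓ B ⊔ A ≠ F (m + 1) ⊓ B ⊔ A

variable {F : ℤ → α} {A B X : α} {m : ℤ}

theorem WCovBy.sup_eq_of_not_le (h : A ⩿ B) (hXB : X ≤ B) (hXA : ¬ X ≤ A) : X ⊔ A = B :=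
  (h.eq_or_eq le_sup_right (sup_le hXB h.le)).resolve_left fun h' => hXA (h' ▸ le_sup_left)

theorem IsInducedJump.ne (h : IsInducedJump F A B m) : F m ≠ F (m + 1) :=
  fun hF => h (by rw [hF])

theorem IsInducedJump.not_inf_le_sup (h : IsInducedJump F A B m) (hF : F (m + 1) ≤ F m) :
    ¬ F m ⊓ B ≤ F (m + 1) ⊓ B ⊔ A :=
  fun hle => h (le_antisymm (sup_le hle le_sup_right) (sup_le_sup_right (inf_le_inf_right _ hF) _))

theorem isInducedJump_of_not_le_of_le (h₁ : ¬ F m ⊓ B ≤ A) (h₂ : F (m + 1) ⊓ B ≤ A) :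
    IsInducedJump F A B m := by
  rw [IsInducedJump, sup_eq_right.2 h₂]
  exact fun h => h₁ (h ▸ le_sup_left)

theorem isInducedJump_iff (hF : F (m + 1) ≤ F m) (hAB : A ⩿ B) :
    IsInducedJump F A B m ↔ ¬ F m ⊓ B ≤ A ∧ F (m + 1) ⊓ B ≤ A := by
  refine ⟨fun h => ⟨fun hle => h.not_inf_le_sup hF (hle.trans le_sup_right), ?_⟩,
    fun h => isInducedJump_of_not_le_of_le h.1 h.2⟩
  by_contra hle
  have hm : F m ⊓ B ⊔ A = B :=
    hAB.sup_eq_of_not_le inf_le_right fun h' => hle ((inf_le_inf_right _ hF).trans h')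
  exact h (by rw [hm, hAB.sup_eq_of_not_le inf_le_right hle])

/-- Two jumps at the same level `m` in disjoint positions of a chain would make
`F m / F (m + 1)` at least two-dimensional. -/
theorem IsInducedJump.not_isInducedJump_of_le [IsModularLattice α] (hF : F (m + 1) ⩿ F m)
    {C D : α} (h : IsInducedJump F A B m) (hBC : B ≤ C) (hCD : C ≤ D) :
    ¬ IsInducedJump F C D m := by
  intro h'
  have hB := h.not_inf_le_sup hF.le
  have hG : F m ⊓ B ⊔ F (m + 1) = F m :=
    hF.sup_eq_of_not_le inf_le_left fun hle => hB ((le_inf hle inf_le_right).trans le_sup_left)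
  apply h'.not_inf_le_sup hF.le
  calc F m ⊓ D = (F m ⊓ B ⊔ F (m + 1)) ⊓ D := by rw [hG]
    _ ≤ (C ⊔ F (m + 1)) ⊓ D := inf_le_inf_right _ (sup_le_sup_right (inf_le_right.trans hBC) _)
    _ = C ⊔ F (m + 1) ⊓ D := sup_inf_assoc_of_le _ hCD
    _ = F (m + 1) ⊓ D ⊔ C := sup_comm _ _

theorem IsInducedJump.swap [IsModularLattice α] (hF : Antitone F) {U W₁ W₁' W₂ : α} {a b : ℤ}
    (hUW₁ : U ⩿ W₁) (hW₁W₂ : W₁ ⩿ W₂) (hUW₁' : U ⩿ W₁') (hsup : W₁ ⊔ W₁' = W₂) (hab : a ≤ b)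
    (hb : IsInducedJump F U W₁ b) (ha : IsInducedJump F W₁ W₂ a) :
    IsInducedJump F U W₁' a ∧ IsInducedJump F W₁' W₂ b := by
  obtain ⟨hb, hb₁⟩ := (isInducedJump_iff (hF (by omega)) hUW₁).1 hb
  obtain ⟨ha, ha₁⟩ := (isInducedJump_iff (hF (by omega)) hW₁W₂).1 ha
  have hW₂ : ¬ W₂ ≤ W₁ := fun h => ha (inf_le_right.trans h)
  have hW₁'W₂ : W₁' ≤ W₂ := hsup ▸ le_sup_right
  have hinf : W₁ ⊓ W₁' = U :=
    (hUW₁'.eq_or_eq (le_inf hUW₁.le hUW₁'.le) inf_le_right).resolve_right fun h =>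
      hW₂ (hsup ▸ sup_le le_rfl (inf_eq_right.1 h))
  -- `F a ⊓ W₂` contains `F b ⊓ W₁`, which spans `W₁` modulo `U`
  have hspan : F a ⊓ W₂ ⊔ U = W₂ := by
    have hW₁ : W₁ ≤ F a ⊓ W₂ ⊔ U := hUW₁.sup_eq_of_not_le inf_le_right hb ▸
      sup_le_sup_right (inf_le_inf (hF hab) hW₁W₂.le) U
    exact (hW₁W₂.eq_or_eq hW₁ (sup_le inf_le_right (hUW₁.le.trans hW₁W₂.le))).resolve_left
      fun h => ha (le_sup_left.trans h.le)
  constructor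
  · refine isInducedJump_of_not_le_of_le (fun hle => hW₂ ?_) ?_
    · have hW₁' : W₁' = F a ⊓ W₁' ⊔ U :=
        calc W₁' = (U ⊔ F a ⊓ W₂) ⊓ W₁' := by rw [sup_comm, hspan, inf_eq_right.2 hW₁'W₂]
          _ = F a ⊓ W₁' ⊔ U := by
            rw [sup_inf_assoc_of_le _ hUW₁'.le, inf_assoc, inf_eq_right.2 hW₁'W₂, sup_comm]
      exact hsup ▸ sup_le le_rfl ((hW₁'.le.trans (sup_le hle le_rfl)).trans hUW₁.le)
    · exact hinf ▸ le_inf ((inf_le_inf_left _ hW₁'W₂).trans ha₁) inf_le_right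
  · refine isInducedJump_of_not_le_of_le
      (fun hle => hb (hinf ▸ le_inf inf_le_right ((inf_le_inf_left _ hW₁W₂.le).trans hle))) ?_
    exact (le_inf inf_le_left ((inf_le_inf_right _ (hF (by omega))).trans ha₁)).trans
      (hb₁.trans hUW₁'.le)

theorem injective_of_isInducedJump [IsModularLattice α] {n : ℕ} {V : ℕ → α} (hV : Monotone V)
    {j : Fin n → ℤ} (hj : ∀ k : Fin n, IsInducedJump F (V k) (V (k + 1)) (j k))
    (hF : ∀ k, F (j k + 1) ⩿ F (j k)) : Injective j :=
  Injective.of_lt_imp_ne fun k l hkl hjkl =>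
    (hj k).not_isInducedJump_of_le (hF k) (hV (by omega : (k : ℕ) + 1 ≤ l)) (hV (by omega))
      (hjkl ▸ hj l)

theorem exists_adjacent_inversion_of_isInducedJump [IsModularLattice α] {n : ℕ}
    {h j : Fin n → ℤ} (hh : StrictMono h) (hFh : ∀ m, F m ≠ F (m + 1) → ∃ i, m = h i)
    (hcov : ∀ i, F (h i + 1) ⩿ F (h i)) {V : ℕ → α} (hV : Monotone V)
    (hj : ∀ k : Fin n, IsInducedJump F (V k) (V (k + 1)) (j k)) (hne : j ≠ h) :
    ∃ i i' : Fin n, (i' : ℕ) = i + 1 ∧ j i' < j i := by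
  have hval : ∀ k, ∃ i, j k = h i := fun k => hFh _ (hj k).ne
  refine exists_adjacent_inversion hh (injective_of_isInducedJump hV hj fun k => ?_)
    (fun k => (hval k).imp fun _ => Eq.symm) hne
  obtain ⟨i, hi⟩ := hval k
  exact hi ▸ hcov i

end InducedJump

section PrefixSpan

variable (E : Type*) {V : Type*} [Field E] [AddCommGroup V] [Module E V] {n : ℕ}

def prefixSpan (v : Fin n → V) (m : ℕ) : Submodule E V :=
  span E {x | ∃ k : Fin n, (k : ℕ) < m ∧ x = v k}

variable (v : Fin n → V)

theorem prefixSpan_mono : Monotone (prefixSpan E v) :=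
  fun _ _ hm => span_mono fun _ ⟨k, hk, hx⟩ => ⟨k, hk.trans_le hm, hx⟩

theorem prefixSpan_succ (k : Fin n) :
    prefixSpan E v (k + 1) = E ∙ v k ⊔ prefixSpan E v k := by
  rw [prefixSpan, prefixSpan, ← span_union]
  congr 1
  ext x
  simp only [Set.mem_union, Set.mem_ofPred_eq, Set.mem_singleton_iff]
  constructor
  · rintro ⟨l, hl, rfl⟩
    obtain hlk | hlk := Nat.lt_succ_iff_lt_or_eq.1 hl
    · exact Or.inr ⟨l, hlk, rfl⟩
    · exact Or.inl (congrArg v (Fin.ext hlk))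
  · rintro (rfl | ⟨l, hl, rfl⟩)
    · exact ⟨k, k.val.lt_succ_self, rfl⟩
    · exact ⟨l, hl.trans k.val.lt_succ_self, rfl⟩

theorem prefixSpan_wcovBy_succ (k : Fin n) : prefixSpan E v k ⩿ prefixSpan E v (k + 1) :=
  prefixSpan_succ E v k ▸ wcovBy_span_singleton_sup (v k) _

theorem prefixSpan_comp_swap {i i' : Fin n} (hi : (i' : ℕ) = i + 1) (m : ℕ) (hm : m ≠ i + 1) :
    prefixSpan E (v ∘ Equiv.swap i i') m = prefixSpan E v m := by
  have hswap : ∀ k : Fin n, ((Equiv.swap i i' k : Fin n) : ℕ) < m ↔ (k : ℕ) < m := by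
    intro k
    rcases eq_or_ne k i with rfl | hki
    · rw [Equiv.swap_apply_left]; omega
    rcases eq_or_ne k i' with rfl | hki'
    · rw [Equiv.swap_apply_right]; omega
    · rw [Equiv.swap_apply_of_ne_of_ne hki hki']
  unfold prefixSpan
  congr 1
  ext x
  constructor
  · rintro ⟨k, hk, rfl⟩
    exact ⟨Equiv.swap i i' k, (hswap k).2 hk, rfl⟩
  · rintro ⟨k, hk, rfl⟩
    exact ⟨Equiv.swap i i' k, (hswap k).2 hk, by simp⟩

theorem prefixSpan_sup_comp_swap {i i' : Fin n} (hi : (i' : ℕ) = i + 1) :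
    prefixSpan E v (i + 1) ⊔ prefixSpan E (v ∘ Equiv.swap i i') (i + 1) =
      prefixSpan E v (i + 1 + 1) := by
  have hi' := prefixSpan_succ E v i'
  rw [hi] at hi'
  rw [prefixSpan_succ E (v ∘ Equiv.swap i i') i, prefixSpan_comp_swap E v hi i (by omega),
    sup_left_comm, sup_eq_left.2 (prefixSpan_wcovBy_succ E v i).le, hi']
  simp

theorem isInducedJump_prefixSpan_comp_swap {F : ℤ → Submodule E V} (hF : Antitone F)
    {i i' : Fin n} (hi : (i' : ℕ) = i + 1) {a b : ℤ} (hab : a ≤ b)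
    (hb : IsInducedJump F (prefixSpan E v i) (prefixSpan E v (i + 1)) b)
    (ha : IsInducedJump F (prefixSpan E v i') (prefixSpan E v (i' + 1)) a) :
    IsInducedJump F (prefixSpan E (v ∘ Equiv.swap i i') i)
        (prefixSpan E (v ∘ Equiv.swap i i') (i + 1)) a ∧
      IsInducedJump F (prefixSpan E (v ∘ Equiv.swap i i') i')
        (prefixSpan E (v ∘ Equiv.swap i i') (i' + 1)) b := by
  have hσ := prefixSpan_comp_swap E v hi
  have hW₁W₂ := prefixSpan_wcovBy_succ E v i'
  have hUW₁' := prefixSpan_wcovBy_succ E (v ∘ Equiv.swap i i') i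
  rw [hi] at ha hW₁W₂
  rw [hσ i (by omega)] at hUW₁' ⊢
  rw [hi, hσ (i + 1 + 1) (by omega)]
  exact hb.swap hF (prefixSpan_wcovBy_succ E v i) hW₁W₂ hUW₁' (prefixSpan_sup_comp_swap E v hi)
    hab ha

end PrefixSpan

theorem Submodule.covBy_of_finrank_quotient_eq_one {E V : Type*} [Field E] [AddCommGroup V]
    [Module E V] {A B : Submodule E V} (hAB : A ≤ B)
    (h : Module.finrank E (B ⧸ A.comap B.subtype) = 1) : A ⋖ B :=
  (covBy_iff_quot_is_simple hAB).2 (isSimpleModule_iff_finrank_eq_one.2 h)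

theorem stmt3_general {E V : Type*} [Field E] [AddCommGroup V] [Module E V]
    {n : ℕ} (e : Module.Basis (Fin n) E V)
    (Fil : ℤ → Submodule E V) (hanti : Antitone Fil)
    (h : Fin n → ℤ) (hmono : StrictMono h)
    (hjumps : ∀ m : ℤ, Fil m ≠ Fil (m + 1) ↔ ∃ i : Fin n, m = h i)
    (hmult : ∀ i : Fin n,
      Module.finrank E (↥(Fil (h i)) ⧸ (Fil (h i + 1)).comap (Fil (h i)).subtype) = 1)
    (S : Equiv.Perm (Fin n) → ℕ → Submodule E V)
    (hS : ∀ w i, S w i = Submodule.span E {x | ∃ k : Fin n, (k : ℕ) < i ∧ x = e (w k)})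
    (j : Equiv.Perm (Fin n) → Fin n → ℤ)
    (hj : ∀ (w : Equiv.Perm (Fin n)) (i : Fin n),
      ((Fil (j w i) ⊓ S w ((i : ℕ) + 1)) ⊔ S w (i : ℕ) ≠
        (Fil (j w i + 1) ⊓ S w ((i : ℕ) + 1)) ⊔ S w (i : ℕ)) ∧
      ∀ m : ℤ, ((Fil m ⊓ S w ((i : ℕ) + 1)) ⊔ S w (i : ℕ) ≠
        (Fil (m + 1) ⊓ S w ((i : ℕ) + 1)) ⊔ S w (i : ℕ)) → m = j w i)
    (w : Equiv.Perm (Fin n)) (hne : j w ≠ h) :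
    ∃ i i' : Fin n, (i' : ℕ) = (i : ℕ) + 1 ∧
      (∀ k : Fin n, k ≠ i → k ≠ i' → j (w * Equiv.swap i i') k = j w k) ∧
      j (w * Equiv.swap i i') i = j w i' ∧
      j (w * Equiv.swap i i') i' = j w i := by
  obtain rfl : S = fun w : Equiv.Perm (Fin n) => prefixSpan E (e ∘ w) := by
    funext w m
    exact hS w m
  have hjump : ∀ (w : Equiv.Perm (Fin n)) (k : Fin n),
      IsInducedJump Fil (prefixSpan E (e ∘ w) k) (prefixSpan E (e ∘ w) (k + 1)) (j w k) :=
    fun w k => (hj w k).1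
  have huniq : ∀ (w : Equiv.Perm (Fin n)) (k : Fin n) m,
      IsInducedJump Fil (prefixSpan E (e ∘ w) k) (prefixSpan E (e ∘ w) (k + 1)) m → m = j w k :=
    fun w k => (hj w k).2
  obtain ⟨i, i', hi, hlt⟩ := exists_adjacent_inversion_of_isInducedJump hmono
    (fun m => (hjumps m).1)
    (fun i => (covBy_of_finrank_quotient_eq_one (hanti (by omega)) (hmult i)).wcovBy)
    (prefixSpan_mono E _) (hjump w) hne
  obtain ⟨hswap_i, hswap_i'⟩ :=
    isInducedJump_prefixSpan_comp_swap E (e ∘ w) hanti hi hlt.le (hjump w i) (hjump w i')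
  have hswap := prefixSpan_comp_swap E (e ∘ w) hi
  refine ⟨i, i', hi, fun k hk hk' => huniq w k _ ?_, (huniq (w * Equiv.swap i i') i _ hswap_i).symm,
    (huniq (w * Equiv.swap i i') i' _ hswap_i').symm⟩
  have hjk : IsInducedJump Fil (prefixSpan E ((e ∘ w) ∘ Equiv.swap i i') k)
      (prefixSpan E ((e ∘ w) ∘ Equiv.swap i i') (k + 1)) (j (w * Equiv.swap i i') k) :=
    hjump (w * Equiv.swap i i') k
  rwa [hswap k fun h => hk' (Fin.ext (h.trans hi.symm)),
    hswap (k + 1) fun h => hk (Fin.ext (by omega))] at hjk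

/-- hyperplane rearrangement lemma.  Let `V` be an `n`-dimensional
`E`-vector space with basis `e₁,…,eₙ`, equipped with an exhaustive decreasing filtration
`(Filⁱ V)_{i∈ℤ}` having exactly `n` jumps `h₁ < … < hₙ`, each of multiplicity one.
For `w ∈ Sₙ` and `1 ≤ i ≤ n` let `V_i^w = span(e_{w(1)},…,e_{w(i)})` and let `j_i(w)` be the
unique jump of the filtration induced on the line `V_i^w / V_{i-1}^w` (here characterized
by `(Fil^m ∩ V_i^w) + V_{i-1}^w ≠ (Fil^{m+1} ∩ V_i^w) + V_{i-1}^w`).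
If `(j₁(w),…,jₙ(w)) ≠ (h₁,…,hₙ)`, then there is `i ∈ {1,…,n−1}` such that the ordering
attached to `w∘(i,i+1)` is obtained from that of `w` by swapping the entries in positions
`i` and `i+1` and leaving all other entries unchanged. -/
theorem stmt3 {E V : Type*} [Field E] [AddCommGroup V] [Module E V]
    {n : ℕ} (hn : 0 < n) (e : Module.Basis (Fin n) E V)
    (Fil : ℤ → Submodule E V) (hanti : Antitone Fil)
    (htop : ∃ N : ℤ, ∀ m ≤ N, Fil m = ⊤) (hbot : ∃ N : ℤ, ∀ m, N ≤ m → Fil m = ⊥)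
    (h : Fin n → ℤ) (hmono : StrictMono h)
    (hjumps : ∀ m : ℤ, Fil m ≠ Fil (m + 1) ↔ ∃ i : Fin n, m = h i)
    (hmult : ∀ i : Fin n,
      Module.finrank E (↥(Fil (h i)) ⧸ (Fil (h i + 1)).comap (Fil (h i)).subtype) = 1)
    (S : Equiv.Perm (Fin n) → ℕ → Submodule E V)
    (hS : ∀ w i, S w i = Submodule.span E {x | ∃ k : Fin n, (k : ℕ) < i ∧ x = e (w k)})
    (j : Equiv.Perm (Fin n) → Fin n → ℤ)
    (hj : ∀ (w : Equiv.Perm (Fin n)) (i : Fin n),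
      ((Fil (j w i) ⊓ S w ((i : ℕ) + 1)) ⊔ S w (i : ℕ) ≠
        (Fil (j w i + 1) ⊓ S w ((i : ℕ) + 1)) ⊔ S w (i : ℕ)) ∧
      ∀ m : ℤ, ((Fil m ⊓ S w ((i : ℕ) + 1)) ⊔ S w (i : ℕ) ≠
        (Fil (m + 1) ⊓ S w ((i : ℕ) + 1)) ⊔ S w (i : ℕ)) → m = j w i)
    (w : Equiv.Perm (Fin n)) (hne : j w ≠ h) :
    ∃ i i' : Fin n, (i' : ℕ) = (i : ℕ) + 1 ∧
      (∀ k : Fin n, k ≠ i → k ≠ i' → j (w * Equiv.swap i i') k = j w k) ∧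
      j (w * Equiv.swap i i') i = j w i' ∧
      j (w * Equiv.swap i i') i' = j w i :=
  stmt3_general e Fil hanti h hmono hjumps hmult S hS j hj w hne
end

section
/- With the notation of the previous filtration setup (V of dimension n with basis e₁,…,eₙ and a filtration with simple jumps h₁ < … < hₙ, and orderings j_i(w) attached to each permutation w), if j_i(w∘(i,i+1)) = j_i(w) for all 1 ≤ i ≤ n−1, then (j₁(w), …, jₙ(w)) = (h₁, …, hₙ), i.e. the ordering attached to w is strictly increasing. -/
/-!
Since `S w i` has codimension one in `S w (i + 1)`, the defining property of `j w i` says exactly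
that `Fil m ⊓ S w (i + 1) ⊄ S w i` iff `m ≤ j w i`. Counting these conditions along the flag gives
`dim Fil m = #{k | m ≤ j w k}`, while the jumps of the filtration give `dim Fil m = #{k | m ≤ h k}`,
so `j w` and `h` take the same values with the same multiplicities. The hypothesis on
`w ∘ (i, i + 1)` makes `j w` monotone: a vector of `Fil (j w i)` in `S (w ∘ (i, i + 1)) (i + 1)` but
not in `S w i` lies in `S w (i + 2)` and not in `S w (i + 1)`, because the two flags meet in `S w i`
at level `i + 1`. A monotone sequence is determined by these counts, hence `j w = h`.
-/

open Module Submodule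

section Lattice

variable {α : Type*} [Lattice α] {a b : α}

theorem CovBy.inf_sup_eq_of_not_inf_le (hab : a ⋖ b) {x : α} (hx : ¬ x ⊓ b ≤ a) :
    x ⊓ b ⊔ a = b :=
  (hab.eq_or_eq le_sup_right (sup_le inf_le_right hab.le)).resolve_left
    fun h ↦ hx (h ▸ le_sup_left)

theorem CovBy.le_iff_not_inf_le (hab : a ⋖ b) {F : ℤ → α} (hF : Antitone F) {j : ℤ}
    (hj : F j ⊓ b ⊔ a ≠ F (j + 1) ⊓ b ⊔ a) (m : ℤ) : m ≤ j ↔ ¬ F m ⊓ b ≤ a := by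
  have hmono : ∀ {k l : ℤ}, k ≤ l → F l ⊓ b ≤ F k ⊓ b := fun hkl ↦ inf_le_inf_right b (hF hkl)
  have hj₀ : ¬ F j ⊓ b ≤ a := fun hle ↦
    hj (by rw [sup_eq_right.2 hle, sup_eq_right.2 ((hmono (by omega)).trans hle)])
  have hj₁ : F (j + 1) ⊓ b ≤ a := by
    by_contra hle
    exact hj (by rw [hab.inf_sup_eq_of_not_inf_le hj₀, hab.inf_sup_eq_of_not_inf_le hle])
  refine ⟨fun hm hle ↦ hj₀ ((hmono hm).trans hle), fun hm ↦ ?_⟩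
  by_contra! hjm
  exact hm ((hmono (by omega : j + 1 ≤ m)).trans hj₁)

end Lattice

namespace Submodule

variable {K V : Type*} [DivisionRing K] [AddCommGroup V] [Module K V]

theorem covBy_iff_finrank_quotient_eq_one {A B : Submodule K V} (hAB : A ≤ B) :
    A ⋖ B ↔ finrank K (B ⧸ A.comap B.subtype) = 1 :=
  (covBy_iff_quot_is_simple hAB).trans isSimpleModule_iff_finrank_eq_one

variable [FiniteDimensional K V]

theorem finrank_eq_add_one_of_covBy {A B : Submodule K V} (hAB : A ⋖ B) :
    finrank K B = finrank K A + 1 := by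
  rw [← finrank_quotient_add_finrank (A.comap B.subtype),
    (covBy_iff_finrank_quotient_eq_one hAB.le).1 hAB,
    (comapSubtypeEquivOfLe hAB.le).finrank_eq, add_comm]

open Classical in
theorem finrank_inf_eq_of_covBy {B C : Submodule K V} (hBC : B ⋖ C) (A : Submodule K V) :
    finrank K ↥(A ⊓ C) = finrank K ↥(A ⊓ B) + if A ⊓ C ≤ B then 0 else 1 := by
  split_ifs with hAC
  · rw [le_antisymm (le_inf inf_le_left hAC) (inf_le_inf_left A hBC.le), add_zero]
  · have hsup : B ⊔ A ⊓ C = C := by rw [sup_comm, hBC.inf_sup_eq_of_not_inf_le hAC]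
    have hinf : B ⊓ (A ⊓ C) = A ⊓ B := by
      rw [inf_comm, inf_assoc, inf_eq_right.2 hBC.le]
    have hcov : B ⊓ (A ⊓ C) ⋖ A ⊓ C := inf_covBy_of_covBy_sup_left (by rwa [hsup])
    rw [hinf] at hcov
    exact finrank_eq_add_one_of_covBy hcov

open Classical in
theorem finrank_inf_eq_sum_of_covBy {n : ℕ} (F : Fin (n + 1) → Submodule K V) (hF : F 0 = ⊥)
    (hcov : ∀ i : Fin n, F i.castSucc ⋖ F i.succ) (A : Submodule K V) :
    finrank K ↥(A ⊓ F (Fin.last n)) =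
      ∑ i : Fin n, if A ⊓ F i.succ ≤ F i.castSucc then 0 else 1 := by
  induction n with
  | zero => simp [hF]
  | succ n ih =>
    rw [Fin.sum_univ_castSucc, ← Fin.succ_last, finrank_inf_eq_of_covBy (hcov _)]
    exact congrArg (· + _) (ih (F ∘ Fin.castSucc) hF fun i ↦ hcov i.castSucc)

end Submodule

namespace Module.Basis

open Set

variable {R M : Type*} [Semiring R] [AddCommMonoid M] [Module R M]

theorem span_image_inf_span_image {ι : Type*} (b : Basis ι R M) (s t : Set ι) :
    span R (b '' s) ⊓ span R (b '' t) = span R (b '' (s ∩ t)) := by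
  ext x
  simp only [mem_inf, b.mem_span_image, subset_inter_iff]

variable {n : ℕ}

theorem flag_reindex (b : Basis (Fin n) R M) (σ : Equiv.Perm (Fin n)) (k : Fin (n + 1)) :
    (b.reindex σ).flag k = span R (b '' (σ.symm '' {i | i.castSucc < k})) := by
  rw [flag, coe_reindex, image_comp]

theorem span_perm_eq_flag (e : Basis (Fin n) R M) (w : Equiv.Perm (Fin n)) (k : Fin (n + 1)) :
    span R {x | ∃ l : Fin n, (l : ℕ) < k ∧ x = e (w l)} = (e.reindex w.symm).flag k := by
  rw [flag, coe_reindex, Equiv.symm_symm]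
  congr 1
  ext x
  simp [Fin.lt_def, eq_comm]

theorem not_inf_flag_le_of_reindex_swap (b : Basis (Fin n) R M) {i i' : Fin n}
    (hi : (i' : ℕ) = i + 1) {X : Submodule R M}
    (hX : ¬ X ⊓ (b.reindex (Equiv.swap i i')).flag i.succ ≤
      (b.reindex (Equiv.swap i i')).flag i.castSucc) :
    ¬ X ⊓ b.flag i'.succ ≤ b.flag i'.castSucc := by
  set σ := Equiv.swap i i'
  have hσ : ∀ l : Fin n, (σ l : ℕ) =
      if (l : ℕ) = i then (i' : ℕ) else if (l : ℕ) = i' then (i : ℕ) else l := fun l ↦ by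
    simp only [σ, Equiv.swap_apply_def, ← Fin.ext_iff]
    split_ifs <;> rfl
  have h₀ : σ.symm '' {l | l.castSucc < i.castSucc} = {l | l.castSucc < i.castSucc} := by
    ext l
    simp only [mem_image_equiv, Equiv.symm_symm, mem_ofPred_eq, Fin.castSucc_lt_castSucc_iff]
    simp only [Fin.lt_def, hσ]
    split_ifs <;> omega
  have h₁ : σ.symm '' {l | l.castSucc < i.succ} ⊆ {l | l.castSucc < i'.succ} := by
    intro l
    simp only [mem_image_equiv, Equiv.symm_symm, mem_ofPred_eq, Fin.castSucc_lt_succ_iff]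
    simp only [Fin.le_def, hσ]
    split_ifs <;> omega
  have h₂ : {l | l.castSucc < i.succ} ∩ σ.symm '' {l | l.castSucc < i.succ} ⊆
      {l | l.castSucc < i.castSucc} := by
    intro l
    simp only [mem_inter_iff, mem_image_equiv, Equiv.symm_symm, mem_ofPred_eq,
      Fin.castSucc_lt_succ_iff, Fin.castSucc_lt_castSucc_iff]
    simp only [Fin.le_def, Fin.lt_def, hσ]
    split_ifs <;> omega
  rw [flag_reindex, flag_reindex, h₀] at hX
  rw [show i'.castSucc = i.succ from Fin.ext (by simp [hi])]
  intro hle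
  refine hX (le_trans (le_inf ?_ inf_le_right)
    ((b.span_image_inf_span_image _ _).trans_le (span_mono (image_mono h₂))))
  exact (inf_le_inf_left X (span_mono (image_mono h₁))).trans hle

open Classical in
theorem finrank_eq_sum_flag {K V : Type*} [DivisionRing K] [AddCommGroup V] [Module K V]
    (b : Basis (Fin n) K V) (A : Submodule K V) :
    finrank K A = ∑ i : Fin n, if A ⊓ b.flag i.succ ≤ b.flag i.castSucc then 0 else 1 := by
  have := b.finiteDimensional_of_finite
  rw [← finrank_inf_eq_sum_of_covBy b.flag b.flag_zero b.flag_covBy, b.flag_last, inf_top_eq]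

end Module.Basis

open Finset

theorem Fin.monotone_of_le_of_val_eq_succ {α : Type*} [Preorder α] {n : ℕ} {f : Fin n → α}
    (hf : ∀ i i' : Fin n, (i' : ℕ) = i + 1 → f i ≤ f i') : Monotone f := by
  cases n with
  | zero => exact fun i ↦ i.elim0
  | succ n => exact Fin.monotone_iff_le_succ.2 fun i ↦ hf _ _ (by simp)

section MonotoneFin

variable {α : Type*} [LinearOrder α] {n : ℕ}

theorem Monotone.le_apply_iff_sub_le_card {f : Fin n → α} (hf : Monotone f) (m : α) (i : Fin n) :
    m ≤ f i ↔ n - i ≤ #{k | m ≤ f k} := by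
  constructor
  · intro hm
    rw [← Fin.card_Ici]
    exact card_le_card fun k hk ↦ mem_filter.2 ⟨mem_univ k, hm.trans (hf (mem_Ici.1 hk))⟩
  · intro hcard
    by_contra hm
    have hsub : #{k | m ≤ f k} ≤ #(Ioi i) := card_le_card fun k hk ↦
      mem_Ioi.2 (lt_of_not_ge fun hki ↦ hm ((mem_filter.1 hk).2.trans (hf hki)))
    rw [Fin.card_Ioi] at hsub
    omega

theorem Monotone.eq_of_card_filter_le_eq {f g : Fin n → α} (hf : Monotone f) (hg : Monotone g)
    (hfg : ∀ m, #{k | m ≤ f k} = #{k | m ≤ g k}) : f = g :=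
  funext fun i ↦ le_antisymm
    ((hg.le_apply_iff_sub_le_card _ i).2 ((hfg _) ▸ (hf.le_apply_iff_sub_le_card _ i).1 le_rfl))
    ((hf.le_apply_iff_sub_le_card _ i).2
      ((hfg _).symm ▸ (hg.le_apply_iff_sub_le_card _ i).1 le_rfl))

end MonotoneFin

theorem finrank_eq_card_filter_le_of_jumps {K V ι : Type*} [DivisionRing K] [AddCommGroup V]
    [Module K V] [FiniteDimensional K V] [Fintype ι] (hV : finrank K V = Fintype.card ι)
    {Fil : ℤ → Submodule K V} (htop : ∃ N, ∀ m ≤ N, Fil m = ⊤) {h : ι → ℤ}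
    (hh : Function.Injective h) (hjumps : ∀ m, Fil m ≠ Fil (m + 1) → ∃ i, m = h i)
    (hcov : ∀ i, Fil (h i + 1) ⋖ Fil (h i)) (m : ℤ) :
    finrank K (Fil m) = #{i | m ≤ h i} := by
  have hstep : ∀ m, finrank K (Fil m) = finrank K (Fil (m + 1)) + #{i | h i = m} := by
    intro m
    by_cases hm : ∃ i, m = h i
    · obtain ⟨i, rfl⟩ := hm
      rw [finrank_eq_add_one_of_covBy (hcov i), card_eq_one.2 ⟨i, by ext; simp [hh.eq_iff]⟩]
    · rw [not_imp_comm.1 (hjumps m) hm, card_eq_zero.2 (filter_eq_empty_iff.2 fun i _ hi ↦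
        hm ⟨i, hi.symm⟩), add_zero]
  have hcount : ∀ m, #{i | m ≤ h i} = #{i | m + 1 ≤ h i} + #{i | h i = m} := by
    intro m
    classical
    rw [← card_union_of_disjoint (disjoint_filter.2 fun i _ h₁ h₂ ↦ by omega)]
    congr 1
    ext i
    simp only [mem_union, mem_filter, mem_univ, true_and]
    omega
  obtain ⟨N, hN⟩ := htop
  obtain ⟨M, hM⟩ := Finite.exists_ge h
  have hbase : ∀ m ≤ min N M, finrank K (Fil m) = #{i | m ≤ h i} := fun m hm ↦ by
    rw [hN m (hm.trans (min_le_left _ _)), finrank_top, hV,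
      filter_true_of_mem fun i _ ↦ hm.trans ((min_le_right _ _).trans (hM i)), card_univ]
  rcases le_total m (min N M) with hm | hm
  · exact hbase m hm
  · induction m, hm using Int.leInduction with
    | base => exact hbase _ le_rfl
    | succ m _ ih => have := hstep m; have := hcount m; omega

theorem stmt4_general {E V : Type*} [Field E] [AddCommGroup V] [Module E V]
    {n : ℕ} (e : Module.Basis (Fin n) E V)
    (Fil : ℤ → Submodule E V) (hanti : Antitone Fil)
    (htop : ∃ N : ℤ, ∀ m ≤ N, Fil m = ⊤)
    (h : Fin n → ℤ) (hmono : StrictMono h)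
    (hjumps : ∀ m : ℤ, Fil m ≠ Fil (m + 1) ↔ ∃ i : Fin n, m = h i)
    (hmult : ∀ i : Fin n,
      Module.finrank E (↥(Fil (h i)) ⧸ (Fil (h i + 1)).comap (Fil (h i)).subtype) = 1)
    (S : Equiv.Perm (Fin n) → ℕ → Submodule E V)
    (hS : ∀ w i, S w i = Submodule.span E {x | ∃ k : Fin n, (k : ℕ) < i ∧ x = e (w k)})
    (j : Equiv.Perm (Fin n) → Fin n → ℤ)
    (hj : ∀ (w : Equiv.Perm (Fin n)) (i : Fin n),
      ((Fil (j w i) ⊓ S w ((i : ℕ) + 1)) ⊔ S w (i : ℕ) ≠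
        (Fil (j w i + 1) ⊓ S w ((i : ℕ) + 1)) ⊔ S w (i : ℕ)) ∧
      ∀ m : ℤ, ((Fil m ⊓ S w ((i : ℕ) + 1)) ⊔ S w (i : ℕ) ≠
        (Fil (m + 1) ⊓ S w ((i : ℕ) + 1)) ⊔ S w (i : ℕ)) → m = j w i)
    (w : Equiv.Perm (Fin n))
    (hfix : ∀ i i' : Fin n, (i' : ℕ) = (i : ℕ) + 1 →
      j (w * Equiv.swap i i') i = j w i) :
    j w = h := by
  have := e.finiteDimensional_of_finite
  set b : Equiv.Perm (Fin n) → Basis (Fin n) E V := fun u ↦ e.reindex u.symm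
  have hSflag : ∀ u (i : Fin n), S u i = (b u).flag i.castSucc ∧ S u (i + 1) = (b u).flag i.succ :=
    fun u i ↦ ⟨(hS u _).trans (e.span_perm_eq_flag u i.castSucc),
      (hS u _).trans (e.span_perm_eq_flag u i.succ)⟩
  have hj_iff : ∀ u i m, m ≤ j u i ↔ ¬ Fil m ⊓ (b u).flag i.succ ≤ (b u).flag i.castSucc :=
    fun u i ↦ ((b u).flag_covBy i).le_iff_not_inf_le hanti <| by
      simpa only [(hSflag u i).1, (hSflag u i).2] using (hj u i).1
  have hcov : ∀ i, Fil (h i + 1) ⋖ Fil (h i) := fun i ↦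
    (covBy_iff_finrank_quotient_eq_one (hanti (Int.le_add_one le_rfl))).2 (hmult i)
  have hcard : ∀ m, #{k | m ≤ j w k} = #{k | m ≤ h k} := fun m ↦ by
    rw [← finrank_eq_card_filter_le_of_jumps (finrank_eq_card_basis e) htop hmono.injective
        (fun m ↦ (hjumps m).1) hcov m, (b w).finrank_eq_sum_flag, card_filter]
    classical
    exact sum_congr rfl fun k _ ↦ (if_congr (hj_iff w k m) rfl rfl).trans (ite_not _ _ _)
  have hswap : ∀ i i' : Fin n, b (w * Equiv.swap i i') = (b w).reindex (Equiv.swap i i') :=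
    fun i i' ↦ Basis.eq_of_apply_eq fun k ↦ by simp [b]
  refine Monotone.eq_of_card_filter_le_eq (Fin.monotone_of_le_of_val_eq_succ fun i i' hi ↦ ?_)
    hmono.monotone hcard
  have hu := (hj_iff _ i (j w i)).1 (hfix i i' hi).ge
  rw [hswap] at hu
  exact (hj_iff w i' (j w i)).2 ((b w).not_inf_flag_le_of_reindex_swap hi hu)

/-- Setup:  Let `V` be an `n`-dimensional
`E`-vector space with basis `e₁,…,eₙ`, equipped with an exhaustive decreasing filtration
`(Filⁱ V)_{i∈ℤ}` having exactly `n` jumps `h₁ < … < hₙ`, each of multiplicity one.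
For `w ∈ Sₙ` and `1 ≤ i ≤ n` let `V_i^w = span(e_{w(1)},…,e_{w(i)})` and let `j_i(w)` be the
unique jump of the filtration induced on the line `V_i^w / V_{i-1}^w` (here characterized
by `(Fil^m ∩ V_i^w) + V_{i-1}^w ≠ (Fil^{m+1} ∩ V_i^w) + V_{i-1}^w`).
**Statement 4.** If `j_i(w∘(i,i+1)) = j_i(w)` for all `1 ≤ i ≤ n−1`, then
`(j₁(w),…,jₙ(w)) = (h₁,…,hₙ)`, i.e. the ordering attached to `w` is strictly increasing. -/
theorem stmt4 {E V : Type*} [Field E] [AddCommGroup V] [Module E V]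
    {n : ℕ} (hn : 0 < n) (e : Module.Basis (Fin n) E V)
    (Fil : ℤ → Submodule E V) (hanti : Antitone Fil)
    (htop : ∃ N : ℤ, ∀ m ≤ N, Fil m = ⊤) (hbot : ∃ N : ℤ, ∀ m, N ≤ m → Fil m = ⊥)
    (h : Fin n → ℤ) (hmono : StrictMono h)
    (hjumps : ∀ m : ℤ, Fil m ≠ Fil (m + 1) ↔ ∃ i : Fin n, m = h i)
    (hmult : ∀ i : Fin n,
      Module.finrank E (↥(Fil (h i)) ⧸ (Fil (h i + 1)).comap (Fil (h i)).subtype) = 1)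
    (S : Equiv.Perm (Fin n) → ℕ → Submodule E V)
    (hS : ∀ w i, S w i = Submodule.span E {x | ∃ k : Fin n, (k : ℕ) < i ∧ x = e (w k)})
    (j : Equiv.Perm (Fin n) → Fin n → ℤ)
    (hj : ∀ (w : Equiv.Perm (Fin n)) (i : Fin n),
      ((Fil (j w i) ⊓ S w ((i : ℕ) + 1)) ⊔ S w (i : ℕ) ≠
        (Fil (j w i + 1) ⊓ S w ((i : ℕ) + 1)) ⊔ S w (i : ℕ)) ∧
      ∀ m : ℤ, ((Fil m ⊓ S w ((i : ℕ) + 1)) ⊔ S w (i : ℕ) ≠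
        (Fil (m + 1) ⊓ S w ((i : ℕ) + 1)) ⊔ S w (i : ℕ)) → m = j w i)
    (w : Equiv.Perm (Fin n))
    (hfix : ∀ i i' : Fin n, (i' : ℕ) = (i : ℕ) + 1 →
      j (w * Equiv.swap i i') i = j w i) :
    j w = h :=
  stmt4_general e Fil hanti htop h hmono hjumps hmult S hS j hj w hfix
end

section
/- In an abelian category, let 0 → A → D₁ → B → 0 and 0 → A → D₂ → B → 0 be two extensions, and suppose given compatible short exact sequences 0 → A' → A → A'' → 0, 0 → B' → B → B'' → 0, and 0 → D_i' → D_i → D_i'' → 0 (i = 1,2) fitting into 3×3 commutative diagrams with exact rows and columns in which D_i' is an extension of B' by A' and D_i'' is an extension of B'' by A''. If moreover each column splits in the underlying additive structure (e.g. the objects are free modules over a ring and the columns are split exact as module sequences), then the Baer sums fit into a short exact sequence 0 → (D₁' + D₂') → (D₁ + D₂) → (D₁'' + D₂'') → 0. -/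
open CategoryTheory CategoryTheory.Limits

universe v u

attribute [local instance] CategoryTheory.Abelian.hasFiniteBiproducts

variable {C : Type u} [Category.{v} C] [Abelian C]

/-- The Baer sum of two extensions `0 → A → D₁ → B → 0` and `0 → A → D₂ → B → 0`:
push out the direct sum extension along the codiagonal `A ⊞ A → A` and pull back along
the diagonal `B → B ⊞ B`. -/
noncomputable def baer {A B D₁ D₂ : C} (i₁ : A ⟶ D₁) (p₁ : D₁ ⟶ B) (i₂ : A ⟶ D₂)
    (p₂ : D₂ ⟶ B) (w₁ : i₁ ≫ p₁ = 0) (w₂ : i₂ ≫ p₂ = 0) : C :=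
  pullback (biprod.lift (𝟙 B) (𝟙 B))
    (pushout.desc (0 : A ⟶ B ⊞ B) (biprod.map p₁ p₂) (by ext <;> simp [w₁, w₂]) :
      pushout (biprod.desc (𝟙 A) (𝟙 A)) (biprod.map i₁ i₂) ⟶ B ⊞ B)

/-- The canonical inclusion `A → D₁ + D₂` into a Baer sum. -/
noncomputable def baerι {A B D₁ D₂ : C} (i₁ : A ⟶ D₁) (p₁ : D₁ ⟶ B) (i₂ : A ⟶ D₂)
    (p₂ : D₂ ⟶ B) (w₁ : i₁ ≫ p₁ = 0) (w₂ : i₂ ≫ p₂ = 0) :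
    A ⟶ baer i₁ p₁ i₂ p₂ w₁ w₂ :=
  pullback.lift (0 : A ⟶ B)
    (pushout.inl (biprod.desc (𝟙 A) (𝟙 A)) (biprod.map i₁ i₂)) (by simp; exact (pushout.inl_desc _ _ _).symm)

/-- The canonical projection `D₁ + D₂ → B` from a Baer sum. -/
noncomputable def baerπ {A B D₁ D₂ : C} (i₁ : A ⟶ D₁) (p₁ : D₁ ⟶ B) (i₂ : A ⟶ D₂)
    (p₂ : D₂ ⟶ B) (w₁ : i₁ ≫ p₁ = 0) (w₂ : i₂ ≫ p₂ = 0) :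
    baer i₁ p₁ i₂ p₂ w₁ w₂ ⟶ B :=
  pullback.fst _ _

/-!
The Baer sum is functorial in morphisms of pairs of extensions (push out and pull back along
the induced maps), so the two 3×3 diagrams give morphisms of extensions
`(A', D₁' + D₂', B') ⟶ (A, D₁ + D₂, B) ⟶ (A'', D₁'' + D₂'', B'')` whose composite vanishes
because every column is a complex. Each Baer sum is again a short exact sequence: a direct sum
of short exact sequences is short exact, and so are its pushout along `A ⊞ A → A` and the
pullback of that along `B → B ⊞ B`. The resulting 3×3 diagram has short exact rows and short
exact outer columns, hence a short exact middle column by a diagram chase (the 3×3 lemma).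
-/

attribute [local simp] pullback.lift_fst pullback.lift_fst_assoc pullback.lift_snd
  pullback.lift_snd_assoc pushout.inl_desc pushout.inl_desc_assoc pushout.inr_desc
  pushout.inr_desc_assoc

namespace CategoryTheory.ShortComplex

lemma ShortExact.biprodMap {S₁ S₂ : ShortComplex C} (h₁ : S₁.ShortExact) (h₂ : S₂.ShortExact) :
    (ShortComplex.mk (biprod.map S₁.f S₂.f) (biprod.map S₁.g S₂.g)
      (by ext <;> simp)).ShortExact := by
  have := h₁.mono_f; have := h₂.mono_f; have := h₁.epi_g; have := h₂.epi_g
  refine .mk' ?_ inferInstance inferInstance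
  rw [exact_iff_exact_up_to_refinements]
  intro T x hx
  obtain ⟨T₁, π₁, _, a₁, ha₁⟩ :=
    h₁.exact.exact_up_to_refinements (x ≫ biprod.fst) (by simpa using hx =≫ biprod.fst)
  obtain ⟨T₂, π₂, _, a₂, ha₂⟩ :=
    h₂.exact.exact_up_to_refinements (π₁ ≫ x ≫ biprod.snd)
      (by simpa using π₁ ≫= hx =≫ biprod.snd)
  refine ⟨T₂, π₂ ≫ π₁, inferInstance, biprod.lift (π₂ ≫ a₁) a₂, ?_⟩
  ext <;> simp [ha₂, ← ha₁]

lemma ShortExact.pushout {S : ShortComplex C} (hS : S.ShortExact) {A : C} (α : S.X₁ ⟶ A) :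
    (ShortComplex.mk (pushout.inl α S.f) (pushout.desc (f := α) (g := S.f) 0 S.g (by simp))
      (pushout.inl_desc _ _ _)).ShortExact := by
  have := hS.mono_f; have := hS.epi_g
  have : Epi (pushout.desc (f := α) (g := S.f) 0 S.g (by simp)) :=
    epi_of_epi_fac (pushout.inr_desc _ _ _)
  refine .mk' ?_ inferInstance this
  rw [exact_iff_exact_up_to_refinements]
  intro T x hx
  obtain ⟨T₁, π₁, _, a, d, hπ₁⟩ := (IsPushout.of_hasPushout α S.f).hom_eq_add_up_to_refinements x
  have hd : d ≫ S.g = 0 := by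
    have h := π₁ ≫= hx
    rw [← Category.assoc, hπ₁] at h
    simpa using h
  obtain ⟨T₂, π₂, _, a', ha'⟩ := hS.exact.exact_up_to_refinements d hd
  refine ⟨T₂, π₂ ≫ π₁, inferInstance, π₂ ≫ a + a' ≫ α, ?_⟩
  simp [hπ₁, reassoc_of% ha', pushout.condition]

lemma ShortExact.pullback {S : ShortComplex C} (hS : S.ShortExact) {B : C} (β : B ⟶ S.X₃) :
    (ShortComplex.mk (pullback.lift (f := β) (g := S.g) 0 S.f (by simp)) (pullback.fst β S.g)
      (pullback.lift_fst _ _ _)).ShortExact := by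
  have := hS.mono_f; have := hS.epi_g
  have : Mono (pullback.lift (f := β) (g := S.g) 0 S.f (by simp)) :=
    mono_of_mono_fac (pullback.lift_snd _ _ _)
  refine .mk' ?_ this inferInstance
  rw [exact_iff_exact_up_to_refinements]
  intro T x hx
  obtain ⟨T₁, π, _, a, ha⟩ := hS.exact.exact_up_to_refinements (x ≫ pullback.snd β S.g) (by
    simp [← pullback.condition, reassoc_of% hx])
  exact ⟨T₁, π, inferInstance, a, pullback.hom_ext (by simp [hx]) (by simpa using ha)⟩

lemma shortExact_τ₂_of_shortExact_τ₁_τ₃ {R₁ R₂ R₃ : ShortComplex C}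
    (h₁ : R₁.ShortExact) (h₂ : R₂.ShortExact) (h₃ : R₃.ShortExact)
    (φ : R₁ ⟶ R₂) (ψ : R₂ ⟶ R₃) (hφψ : φ ≫ ψ = 0)
    (hc₁ : (ShortComplex.mk φ.τ₁ ψ.τ₁ (by rw [← comp_τ₁, hφψ, zero_τ₁])).ShortExact)
    (hc₃ : (ShortComplex.mk φ.τ₃ ψ.τ₃ (by rw [← comp_τ₃, hφψ, zero_τ₃])).ShortExact) :
    (ShortComplex.mk φ.τ₂ ψ.τ₂ (by rw [← comp_τ₂, hφψ, zero_τ₂])).ShortExact := by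
  have := h₁.mono_f; have := h₂.mono_f; have := h₃.mono_f
  have := h₁.epi_g; have := h₂.epi_g; have := h₃.epi_g
  have := hc₁.mono_f; have := hc₃.mono_f; have := hc₁.epi_g; have := hc₃.epi_g
  have hψ : φ.τ₂ ≫ ψ.τ₂ = 0 := by rw [← comp_τ₂, hφψ, zero_τ₂]
  refine .mk' ?_ (mono_τ₂_of_exact_of_mono φ h₁.exact) (epi_τ₂_of_exact_of_epi ψ h₃.exact)
  rw [exact_iff_exact_up_to_refinements]
  intro T x (hx : x ≫ ψ.τ₂ = 0)
  obtain ⟨T₁, π₁, _, y, hy⟩ := hc₃.exact.exact_up_to_refinements (x ≫ R₂.g)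
    (by simp [← ψ.comm₂₃, reassoc_of% hx])
  obtain ⟨T₂, π₂, _, z, hz⟩ := surjective_up_to_refinements_of_epi R₁.g y
  have hxz : (π₂ ≫ π₁ ≫ x - z ≫ φ.τ₂) ≫ R₂.g = 0 := by
    simp only [Preadditive.sub_comp, Category.assoc, φ.comm₂₃]
    rw [← reassoc_of% hz, ← hy, sub_self]
  obtain ⟨T₃, π₃, _, u, hu⟩ := h₂.exact.exact_up_to_refinements _ hxz
  have hu₀ : u ≫ ψ.τ₁ = 0 := by
    rw [← cancel_mono R₃.f, Category.assoc, ψ.comm₁₂, ← reassoc_of% hu]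
    simp [hx, hψ]
  obtain ⟨T₄, π₄, _, v, hv⟩ := hc₁.exact.exact_up_to_refinements u hu₀
  refine ⟨T₄, π₄ ≫ π₃ ≫ π₂ ≫ π₁, inferInstance, π₄ ≫ π₃ ≫ z + v ≫ R₁.f, ?_⟩
  have := π₄ ≫= hu
  simp only [Preadditive.comp_sub, sub_eq_iff_eq_add] at this
  simp [this, reassoc_of% hv, φ.comm₁₂, add_comm]

end CategoryTheory.ShortComplex

section Baer

variable {A B D₁ D₂ : C} {i₁ : A ⟶ D₁} {p₁ : D₁ ⟶ B} {i₂ : A ⟶ D₂} {p₂ : D₂ ⟶ B}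

lemma baerι_baerπ (w₁ : i₁ ≫ p₁ = 0) (w₂ : i₂ ≫ p₂ = 0) :
    baerι i₁ p₁ i₂ p₂ w₁ w₂ ≫ baerπ i₁ p₁ i₂ p₂ w₁ w₂ = 0 :=
  pullback.lift_fst _ _ _

noncomputable def baerShortComplex (w₁ : i₁ ≫ p₁ = 0) (w₂ : i₂ ≫ p₂ = 0) : ShortComplex C :=
  ShortComplex.mk _ _ (baerι_baerπ w₁ w₂)

lemma baerShortComplex_shortExact {w₁ : i₁ ≫ p₁ = 0} {w₂ : i₂ ≫ p₂ = 0}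
    (h₁ : (ShortComplex.mk i₁ p₁ w₁).ShortExact) (h₂ : (ShortComplex.mk i₂ p₂ w₂).ShortExact) :
    (baerShortComplex w₁ w₂).ShortExact :=
  ((h₁.biprodMap h₂).pushout (biprod.desc (𝟙 A) (𝟙 A))).pullback (biprod.lift (𝟙 B) (𝟙 B))

end Baer

section Functoriality

variable {A B D₁ D₂ A₂ B₂ E₁ E₂ : C} {i₁ : A ⟶ D₁} {p₁ : D₁ ⟶ B} {i₂ : A ⟶ D₂} {p₂ : D₂ ⟶ B}
  {j₁ : A₂ ⟶ E₁} {q₁ : E₁ ⟶ B₂} {j₂ : A₂ ⟶ E₂} {q₂ : E₂ ⟶ B₂}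
  (w₁ : i₁ ≫ p₁ = 0) (w₂ : i₂ ≫ p₂ = 0) (v₁ : j₁ ≫ q₁ = 0) (v₂ : j₂ ≫ q₂ = 0)
  {α : A ⟶ A₂} {β : B ⟶ B₂} {δ₁ : D₁ ⟶ E₁} {δ₂ : D₂ ⟶ E₂}
  (s₁ : i₁ ≫ δ₁ = α ≫ j₁) (t₁ : p₁ ≫ β = δ₁ ≫ q₁) (s₂ : i₂ ≫ δ₂ = α ≫ j₂) (t₂ : p₂ ≫ β = δ₂ ≫ q₂)

noncomputable def baerMap : baer i₁ p₁ i₂ p₂ w₁ w₂ ⟶ baer j₁ q₁ j₂ q₂ v₁ v₂ :=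
  pullback.map _ _ _ _ β
    (pushout.map _ _ _ _ α (biprod.map δ₁ δ₂) (biprod.map α α) (by ext <;> simp)
      (by ext <;> simp [s₁, s₂]))
    (biprod.map β β) (by ext <;> simp)
    (by apply pushout.hom_ext <;> ext <;> simp [t₁, t₂])

noncomputable def baerHom : baerShortComplex w₁ w₂ ⟶ baerShortComplex v₁ v₂ where
  τ₁ := α
  τ₂ := baerMap w₁ w₂ v₁ v₂ s₁ t₁ s₂ t₂
  τ₃ := β
  comm₁₂ := by
    dsimp only [baerShortComplex, baerι, baerMap]
    delta baer
    apply pullback.hom_ext <;> simp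
  comm₂₃ := pullback.lift_fst _ _ _

variable {A₃ B₃ F₁ F₂ : C} {k₁ : A₃ ⟶ F₁} {r₁ : F₁ ⟶ B₃} {k₂ : A₃ ⟶ F₂} {r₂ : F₂ ⟶ B₃}
  (u₁ : k₁ ≫ r₁ = 0) (u₂ : k₂ ≫ r₂ = 0)
  {α' : A₂ ⟶ A₃} {β' : B₂ ⟶ B₃} {δ₁' : E₁ ⟶ F₁} {δ₂' : E₂ ⟶ F₂}
  (s₁' : j₁ ≫ δ₁' = α' ≫ k₁) (t₁' : q₁ ≫ β' = δ₁' ≫ r₁)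
  (s₂' : j₂ ≫ δ₂' = α' ≫ k₂) (t₂' : q₂ ≫ β' = δ₂' ≫ r₂)

lemma baerMap_comp_baerMap_eq_zero (hα : α ≫ α' = 0) (hβ : β ≫ β' = 0)
    (hδ₁ : δ₁ ≫ δ₁' = 0) (hδ₂ : δ₂ ≫ δ₂' = 0) :
    baerMap w₁ w₂ v₁ v₂ s₁ t₁ s₂ t₂ ≫ baerMap v₁ v₂ u₁ u₂ s₁' t₁' s₂' t₂' = 0 := by
  -- `simp` cannot see through `baer`, in particular not in the type of the zero morphism.
  delta baer
  apply pullback.hom_ext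
  · simp [baerMap, hβ]
  · simp only [baerMap, Category.assoc, pullback.lift_snd, pullback.lift_snd_assoc, zero_comp]
    convert comp_zero
    apply pushout.hom_ext
    · simp [reassoc_of% hα]
    · apply biprod.hom_ext' <;> simp [reassoc_of% hδ₁, reassoc_of% hδ₂]

end Functoriality

theorem stmt8_general {A' A A'' B' B B'' D₁' D₁ D₁'' D₂' D₂ D₂'' : C}
    -- rows (extensions), for t = 1, 2 and each of the three levels
    (ia₁' : A' ⟶ D₁') (pb₁' : D₁' ⟶ B') (ia₁ : A ⟶ D₁) (pb₁ : D₁ ⟶ B)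
    (ia₁'' : A'' ⟶ D₁'') (pb₁'' : D₁'' ⟶ B'')
    (ia₂' : A' ⟶ D₂') (pb₂' : D₂' ⟶ B') (ia₂ : A ⟶ D₂) (pb₂ : D₂ ⟶ B)
    (ia₂'' : A'' ⟶ D₂'') (pb₂'' : D₂'' ⟶ B'')
    (w₁' : ia₁' ≫ pb₁' = 0) (w₁ : ia₁ ≫ pb₁ = 0) (w₁'' : ia₁'' ≫ pb₁'' = 0)
    (w₂' : ia₂' ≫ pb₂' = 0) (w₂ : ia₂ ≫ pb₂ = 0) (w₂'' : ia₂'' ≫ pb₂'' = 0)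
    (he₁' : (ShortComplex.mk ia₁' pb₁' w₁').ShortExact)
    (he₁ : (ShortComplex.mk ia₁ pb₁ w₁).ShortExact)
    (he₁'' : (ShortComplex.mk ia₁'' pb₁'' w₁'').ShortExact)
    (he₂' : (ShortComplex.mk ia₂' pb₂' w₂').ShortExact)
    (he₂ : (ShortComplex.mk ia₂ pb₂ w₂).ShortExact)
    (he₂'' : (ShortComplex.mk ia₂'' pb₂'' w₂'').ShortExact)
    -- columns
    (aA : A' ⟶ A) (aA' : A ⟶ A'') (bB : B' ⟶ B) (bB' : B ⟶ B'')
    (d₁ : D₁' ⟶ D₁) (d₁' : D₁ ⟶ D₁'') (d₂ : D₂' ⟶ D₂) (d₂' : D₂ ⟶ D₂'')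
    (wA : aA ≫ aA' = 0) (wB : bB ≫ bB' = 0) (wD₁ : d₁ ≫ d₁' = 0) (wD₂ : d₂ ≫ d₂' = 0)
    (hcA : (ShortComplex.mk aA aA' wA).ShortExact)
    (hcB : (ShortComplex.mk bB bB' wB).ShortExact)
    -- commutativity of the 3×3 diagrams
    (sq₁a : ia₁' ≫ d₁ = aA ≫ ia₁) (sq₁b : pb₁' ≫ bB = d₁ ≫ pb₁)
    (sq₁c : aA' ≫ ia₁'' = ia₁ ≫ d₁') (sq₁d : pb₁ ≫ bB' = d₁' ≫ pb₁'')
    (sq₂a : ia₂' ≫ d₂ = aA ≫ ia₂) (sq₂b : pb₂' ≫ bB = d₂ ≫ pb₂)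
    (sq₂c : aA' ≫ ia₂'' = ia₂ ≫ d₂') (sq₂d : pb₂ ≫ bB' = d₂' ≫ pb₂'') :
    ∃ (f : baer ia₁' pb₁' ia₂' pb₂' w₁' w₂' ⟶ baer ia₁ pb₁ ia₂ pb₂ w₁ w₂)
      (g : baer ia₁ pb₁ ia₂ pb₂ w₁ w₂ ⟶ baer ia₁'' pb₁'' ia₂'' pb₂'' w₁'' w₂'')
      (wfg : f ≫ g = 0),
      (ShortComplex.mk f g wfg).ShortExact ∧
      baerι ia₁' pb₁' ia₂' pb₂' w₁' w₂' ≫ f = aA ≫ baerι ia₁ pb₁ ia₂ pb₂ w₁ w₂ ∧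
      f ≫ baerπ ia₁ pb₁ ia₂ pb₂ w₁ w₂ = baerπ ia₁' pb₁' ia₂' pb₂' w₁' w₂' ≫ bB ∧
      baerι ia₁ pb₁ ia₂ pb₂ w₁ w₂ ≫ g = aA' ≫ baerι ia₁'' pb₁'' ia₂'' pb₂'' w₁'' w₂'' ∧
      g ≫ baerπ ia₁'' pb₁'' ia₂'' pb₂'' w₁'' w₂'' = baerπ ia₁ pb₁ ia₂ pb₂ w₁ w₂ ≫ bB' := by
  let φ := baerHom w₁' w₂' w₁ w₂ sq₁a sq₁b sq₂a sq₂b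
  let ψ := baerHom w₁ w₂ w₁'' w₂'' sq₁c.symm sq₁d sq₂c.symm sq₂d
  have hfg : φ.τ₂ ≫ ψ.τ₂ = 0 := baerMap_comp_baerMap_eq_zero w₁' w₂' w₁ w₂ sq₁a sq₁b sq₂a sq₂b
    w₁'' w₂'' sq₁c.symm sq₁d sq₂c.symm sq₂d wA wB wD₁ wD₂
  refine ⟨φ.τ₂, ψ.τ₂, hfg, ?_, φ.comm₁₂.symm, φ.comm₂₃, ψ.comm₁₂.symm, ψ.comm₂₃⟩
  exact ShortComplex.shortExact_τ₂_of_shortExact_τ₁_τ₃ (baerShortComplex_shortExact he₁' he₂')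
    (baerShortComplex_shortExact he₁ he₂) (baerShortComplex_shortExact he₁'' he₂'') φ ψ
    (ShortComplex.hom_ext _ _ wA hfg wB) hcA hcB

/-- In an abelian category, suppose given two extensions
`0 → A → Dₜ → B → 0` (`t = 1,2`) together with compatible short exact sequences
`0 → A' → A → A'' → 0`, `0 → B' → B → B'' → 0` and `0 → Dₜ' → Dₜ → Dₜ'' → 0` fitting
into 3×3 commutative diagrams with exact rows and columns, in which `Dₜ'` is an
extension of `B'` by `A'` and `Dₜ''` an extension of `B''` by `A''`.  If moreover each
column splits (admits a retraction), then the Baer sums fit into a short exact sequence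
`0 → (D₁' + D₂') → (D₁ + D₂) → (D₁'' + D₂'') → 0`, via maps compatible with the
canonical inclusions from `A', A, A''` and projections to `B', B, B''`. -/
theorem stmt8 {A' A A'' B' B B'' D₁' D₁ D₁'' D₂' D₂ D₂'' : C}
    -- rows (extensions), for t = 1, 2 and each of the three levels
    (ia₁' : A' ⟶ D₁') (pb₁' : D₁' ⟶ B') (ia₁ : A ⟶ D₁) (pb₁ : D₁ ⟶ B)
    (ia₁'' : A'' ⟶ D₁'') (pb₁'' : D₁'' ⟶ B'')
    (ia₂' : A' ⟶ D₂') (pb₂' : D₂' ⟶ B') (ia₂ : A ⟶ D₂) (pb₂ : D₂ ⟶ B)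
    (ia₂'' : A'' ⟶ D₂'') (pb₂'' : D₂'' ⟶ B'')
    (w₁' : ia₁' ≫ pb₁' = 0) (w₁ : ia₁ ≫ pb₁ = 0) (w₁'' : ia₁'' ≫ pb₁'' = 0)
    (w₂' : ia₂' ≫ pb₂' = 0) (w₂ : ia₂ ≫ pb₂ = 0) (w₂'' : ia₂'' ≫ pb₂'' = 0)
    (he₁' : (ShortComplex.mk ia₁' pb₁' w₁').ShortExact)
    (he₁ : (ShortComplex.mk ia₁ pb₁ w₁).ShortExact)
    (he₁'' : (ShortComplex.mk ia₁'' pb₁'' w₁'').ShortExact)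
    (he₂' : (ShortComplex.mk ia₂' pb₂' w₂').ShortExact)
    (he₂ : (ShortComplex.mk ia₂ pb₂ w₂).ShortExact)
    (he₂'' : (ShortComplex.mk ia₂'' pb₂'' w₂'').ShortExact)
    -- columns
    (aA : A' ⟶ A) (aA' : A ⟶ A'') (bB : B' ⟶ B) (bB' : B ⟶ B'')
    (d₁ : D₁' ⟶ D₁) (d₁' : D₁ ⟶ D₁'') (d₂ : D₂' ⟶ D₂) (d₂' : D₂ ⟶ D₂'')
    (wA : aA ≫ aA' = 0) (wB : bB ≫ bB' = 0) (wD₁ : d₁ ≫ d₁' = 0) (wD₂ : d₂ ≫ d₂' = 0)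
    (hcA : (ShortComplex.mk aA aA' wA).ShortExact)
    (hcB : (ShortComplex.mk bB bB' wB).ShortExact)
    (hcD₁ : (ShortComplex.mk d₁ d₁' wD₁).ShortExact)
    (hcD₂ : (ShortComplex.mk d₂ d₂' wD₂).ShortExact)
    -- the columns split
    (hsA : ∃ r : A ⟶ A', aA ≫ r = 𝟙 A') (hsB : ∃ r : B ⟶ B', bB ≫ r = 𝟙 B')
    (hsD₁ : ∃ r : D₁ ⟶ D₁', d₁ ≫ r = 𝟙 D₁') (hsD₂ : ∃ r : D₂ ⟶ D₂', d₂ ≫ r = 𝟙 D₂')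
    -- commutativity of the 3×3 diagrams
    (sq₁a : ia₁' ≫ d₁ = aA ≫ ia₁) (sq₁b : pb₁' ≫ bB = d₁ ≫ pb₁)
    (sq₁c : aA' ≫ ia₁'' = ia₁ ≫ d₁') (sq₁d : pb₁ ≫ bB' = d₁' ≫ pb₁'')
    (sq₂a : ia₂' ≫ d₂ = aA ≫ ia₂) (sq₂b : pb₂' ≫ bB = d₂ ≫ pb₂)
    (sq₂c : aA' ≫ ia₂'' = ia₂ ≫ d₂') (sq₂d : pb₂ ≫ bB' = d₂' ≫ pb₂'') :
    ∃ (f : baer ia₁' pb₁' ia₂' pb₂' w₁' w₂' ⟶ baer ia₁ pb₁ ia₂ pb₂ w₁ w₂)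
      (g : baer ia₁ pb₁ ia₂ pb₂ w₁ w₂ ⟶ baer ia₁'' pb₁'' ia₂'' pb₂'' w₁'' w₂'')
      (wfg : f ≫ g = 0),
      (ShortComplex.mk f g wfg).ShortExact ∧
      baerι ia₁' pb₁' ia₂' pb₂' w₁' w₂' ≫ f = aA ≫ baerι ia₁ pb₁ ia₂ pb₂ w₁ w₂ ∧
      f ≫ baerπ ia₁ pb₁ ia₂ pb₂ w₁ w₂ = baerπ ia₁' pb₁' ia₂' pb₂' w₁' w₂' ≫ bB ∧
      baerι ia₁ pb₁ ia₂ pb₂ w₁ w₂ ≫ g = aA' ≫ baerι ia₁'' pb₁'' ia₂'' pb₂'' w₁'' w₂'' ∧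
      g ≫ baerπ ia₁'' pb₁'' ia₂'' pb₂'' w₁'' w₂'' = baerπ ia₁ pb₁ ia₂ pb₂ w₁ w₂ ≫ bB' :=
  stmt8_general ia₁' pb₁' ia₁ pb₁ ia₁'' pb₁'' ia₂' pb₂' ia₂ pb₂ ia₂'' pb₂'' w₁' w₁ w₁'' w₂' w₂ w₂''
    he₁' he₁ he₁'' he₂' he₂ he₂'' aA aA' bB bB' d₁ d₁' d₂ d₂' wA wB wD₁ wD₂ hcA hcB sq₁a sq₁b sq₁c
    sq₁d sq₂a sq₂b sq₂c sq₂d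
end

section
/- Let R be a ring, and let t be a regular central element of an R-algebra acting on modules. Let 0 → D₁ → D → D₂ → 0 be a short exact sequence of t-torsion-free modules with D₂ also torsion-free, and let k ≥ 0. Let ι_k(D) be the pushout of D along D₁ ↪ t^{-k}D₁ (inside D₁[1/t]) and let p_k(D) = π^{-1}(t^k D₂) be the pullback of D along t^k D₂ ↪ D₂. Then p_k(D) = t^k · ι_k(D) as submodules of D[1/t]; in particular p_k(D) ≅ ι_k(D) as abstract extensions after twisting by t^k. -/
/-- Let `t` be a regular (central) element acting on modules and let
`0 → D₁ → D → D₂ → 0` be an extension of `t`-torsion-free modules.  We realize the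
situation inside the localization `D[1/t]`, modelled by an ambient module `M` on which
`t` acts bijectively, with `D₁ ≤ D` submodules of `M`.  Then the pullback
`p_k(D) = π⁻¹(t^k D₂) = D₁ + t^k D` and the pushout `ι_k(D) = t^{-k} D₁ + D` (where
`t^{-k} D₁` is the preimage of `D₁` under multiplication by `t^k`) satisfy
`p_k(D) = t^k · ι_k(D)` as submodules of `D[1/t]`; in particular `p_k(D)` is the twist of
`ι_k(D)` by `t^k`, compatibly with the extension structures
`0 → t^{-k}D₁ → ι_k(D) → D₂ → 0` and `0 → D₁ → p_k(D) → t^k D₂ → 0`. -/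
theorem stmt9 {R M : Type*} [CommRing R] [AddCommGroup M] [Module R M]
    (t : R) (ht : Function.Bijective fun x : M => t • x)
    (D D₁ : Submodule R M) (hD₁ : D₁ ≤ D) (k : ℕ) :
    Submodule.map (LinearMap.lsmul R M (t ^ k))
        (Submodule.comap (LinearMap.lsmul R M (t ^ k)) D₁ ⊔ D)
      = D₁ ⊔ Submodule.map (LinearMap.lsmul R M (t ^ k)) D := by
  have hs : Function.Surjective (LinearMap.lsmul R M (t ^ k)) := by
    induction k with
    | zero => intro x; exact ⟨x, by simp⟩
    | succ n ih =>
      intro x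
      obtain ⟨y, hy⟩ := ht.2 x
      obtain ⟨z, hz⟩ := ih y
      refine ⟨z, ?_⟩
      simp only [LinearMap.lsmul_apply] at hz ⊢
      rw [pow_succ', mul_smul, hz]; exact hy
  rw [Submodule.map_sup, Submodule.map_comap_eq_of_surjective hs]
end

section
/- Let D be a non-critical crystabelline (φ,Γ_K)-module of rank n over ℛ_{K,E} with Weil–Deligne representation ⊕φ_i, Hodge–Tate weights h_{i,σ}, and φ^f-eigenvalues α_i = φ_i(π_K). Choose τ ∈ S_n with v_p(α_{τ(1)}) ≤ … ≤ v_p(α_{τ(n)}). Then D is étale if and only if Σ_{i=1}^j v_p(α_{τ(i)}) ≥ −(1/e)·Σ_σ Σ_{i=1}^j h_{i,σ} for all 1 ≤ j < n, and Σ_{i=1}^n v_p(α_i) = −(1/e)·Σ_{σ,i} h_{i,σ}. -/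
lemma aux_le {m : ℕ} {f : Fin m → ℕ} (hf : StrictMono f) (j : Fin m) : (j : ℕ) ≤ f j := by
  obtain ⟨v, hv⟩ := j
  induction v with
  | zero => exact Nat.zero_le _
  | succ k ih =>
    have hk : k < m := Nat.lt_of_succ_lt hv
    have h1 := ih hk
    have h2 := hf (show (⟨k, hk⟩ : Fin m) < ⟨k + 1, hv⟩ by simp [Fin.lt_def])
    simp only at *
    omega

lemma aux_filter_image {n m : ℕ} (hm : m ≤ n) :
    Finset.univ.filter (fun i : Fin n => (i : ℕ) < m) =
      (Finset.univ : Finset (Fin m)).image (Fin.castLE hm) := by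
  ext i
  simp only [Finset.mem_filter, Finset.mem_univ, true_and, Finset.mem_image]
  constructor
  · intro hi; exact ⟨⟨(i : ℕ), hi⟩, Fin.ext rfl⟩
  · rintro ⟨j, rfl⟩; exact j.2

lemma aux_filter_card {n m : ℕ} (hm : m ≤ n) :
    (Finset.univ.filter (fun i : Fin n => (i : ℕ) < m)).card = m := by
  rw [aux_filter_image hm, Finset.card_image_of_injective _ (Fin.castLE_injective hm),
    Finset.card_univ, Fintype.card_fin]

lemma aux_subset {n m : ℕ} (hm : m ≤ n) (h : Fin n → ℚ)
    (hmono : ∀ i j : Fin n, i ≤ j → h i ≤ h j) (T : Finset (Fin n)) (hT : T.card = m) :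
    ∑ i ∈ Finset.univ.filter (fun i : Fin n => (i : ℕ) < m), h i ≤ ∑ k ∈ T, h k := by
  have hinj : Function.Injective (Fin.castLE hm) := Fin.castLE_injective hm
  rw [aux_filter_image hm, Finset.sum_image (fun a _ b _ hab => hinj hab)]
  set ι := T.orderEmbOfFin hT with hι
  have hTimg : T = Finset.univ.image (fun j : Fin m => ι j) := by
    ext k
    simp only [Finset.mem_image, Finset.mem_univ, true_and]
    constructor
    · intro hk
      have hk' : k ∈ Set.range ι := by rw [Finset.range_orderEmbOfFin T hT]; exact hk
      exact hk'
    · rintro ⟨j, rfl⟩; exact Finset.orderEmbOfFin_mem T hT j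
  rw [hTimg, Finset.sum_image (fun a _ b _ hab => ι.injective hab)]
  apply Finset.sum_le_sum
  intro j _
  apply hmono
  have hstrict : StrictMono (fun j : Fin m => ((ι j : Fin n) : ℕ)) :=
    fun a b hab => ι.strictMono hab
  exact Fin.le_def.mpr (by simpa using aux_le hstrict j)

/-- Let `D` be a non-critical crystabelline `(φ,Γ_K)`-module of rank `n`
over `ℛ_{K,E}` with Weil–Deligne representation `⊕φ_i`, Hodge–Tate weights `h_{i,σ}`
(indexed by embeddings `σ ∈ Σ_K`), and `φ^f`-eigenvalues `α_i = φ_i(π_K)`.  Choose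
`τ ∈ S_n` with `v_p(α_{τ(1)}) ≤ … ≤ v_p(α_{τ(n)})`.  Then `D` is étale if and only if
`Σ_{i=1}^j v_p(α_{τ(i)}) ≥ −(1/e)·Σ_σ Σ_{i=1}^j h_{i,σ}` for all `1 ≤ j < n`, and
`Σ_{i=1}^n v_p(α_i) = −(1/e)·Σ_{σ,i} h_{i,σ}`.

We axiomatize the context facts: every refinement `w ∈ S_n` yields a triangulation whose
step `Fil_w^m(D)` has slope `(1/(f·m))·Σ_{i≤m} (v_p(α_{w(i)}) + (1/e)Σ_σ h_{i,σ})`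
(`hslope`); the saturated submodules of `D` are exactly these filtration steps (`hsat`);
and `D` is étale iff its slope is `0` and it has no saturated submodule of negative
slope (`hetale`). -/
theorem stmt13 {Ex Emb : Type*} [CommGroup Ex] [Fintype Emb]
    (f e : ℕ) (hf : 0 < f) (he : 0 < e) (vp : Ex → ℚ)
    (n : ℕ) (hn : 0 < n) (α : Fin n → Ex) (hw : Fin n → Emb → ℤ)
    (τ : Equiv.Perm (Fin n))
    (hτ : ∀ i j : Fin n, i ≤ j → vp (α (τ i)) ≤ vp (α (τ j)))
    (PG : Type*) (μ : PG → ℚ) (Etale : PG → Prop) (SatSub : PG → Set PG)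
    (Filw : Equiv.Perm (Fin n) → ℕ → PG) (D : PG)
    (hFilTop : ∀ w : Equiv.Perm (Fin n), Filw w n = D)
    (hslope : ∀ (w : Equiv.Perm (Fin n)) (m : ℕ), 1 ≤ m → m ≤ n →
      μ (Filw w m) =
        (∑ i ∈ Finset.univ.filter (fun i : Fin n => (i : ℕ) < m),
          (vp (α (w i)) + (∑ σ : Emb, (hw i σ : ℚ)) / (e : ℚ))) / ((f : ℚ) * (m : ℚ)))
    (hsat : ∀ X : PG, X ∈ SatSub D ↔
      ∃ (w : Equiv.Perm (Fin n)) (m : ℕ), 1 ≤ m ∧ m ≤ n ∧ X = Filw w m)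
    (hetale : Etale D ↔ (μ D = 0 ∧ ∀ Y ∈ SatSub D, 0 ≤ μ Y)) :
    Etale D ↔
      ((∀ j : ℕ, 1 ≤ j → j < n →
          -(1 / (e : ℚ)) * (∑ σ : Emb, ∑ i ∈ Finset.univ.filter (fun i : Fin n => (i : ℕ) < j),
              (hw i σ : ℚ)) ≤
            ∑ i ∈ Finset.univ.filter (fun i : Fin n => (i : ℕ) < j), vp (α (τ i))) ∧
        ∑ i : Fin n, vp (α i) =
          -(1 / (e : ℚ)) * ∑ σ : Emb, ∑ i : Fin n, (hw i σ : ℚ)) := by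
  classical
  have hfm : ∀ m : ℕ, 1 ≤ m → (0 : ℚ) < (f : ℚ) * (m : ℚ) := by
    intro m hm
    apply mul_pos
    · exact_mod_cast hf
    · exact_mod_cast hm
  have hfilt : (Finset.univ.filter (fun i : Fin n => (i : ℕ) < n)) = Finset.univ := by
    apply Finset.filter_true_of_mem
    intro i _
    exact i.isLt
  have hcsum : ∀ m : ℕ,
      ∑ i ∈ Finset.univ.filter (fun i : Fin n => (i : ℕ) < m), (∑ σ : Emb, (hw i σ : ℚ)) / (e : ℚ)
        = (1 / (e : ℚ)) * ∑ σ : Emb,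
            ∑ i ∈ Finset.univ.filter (fun i : Fin n => (i : ℕ) < m), (hw i σ : ℚ) := by
    intro m
    rw [← Finset.sum_div, Finset.sum_comm]
    ring
  have hcuniv : ∑ i : Fin n, (∑ σ : Emb, (hw i σ : ℚ)) / (e : ℚ)
      = (1 / (e : ℚ)) * ∑ σ : Emb, ∑ i : Fin n, (hw i σ : ℚ) := by
    rw [← Finset.sum_div, Finset.sum_comm]
    ring
  have hkey : ∀ (w : Equiv.Perm (Fin n)) (m : ℕ), m ≤ n →
      ∑ i ∈ Finset.univ.filter (fun i : Fin n => (i : ℕ) < m), vp (α (τ i))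
        ≤ ∑ i ∈ Finset.univ.filter (fun i : Fin n => (i : ℕ) < m), vp (α (w i)) := by
    intro w m hm
    set S := Finset.univ.filter (fun i : Fin n => (i : ℕ) < m) with hS
    have h1 : ∑ k ∈ S.image w, vp (α k) = ∑ i ∈ S, vp (α (w i)) :=
      Finset.sum_image (s := S) (f := fun k => vp (α k)) (g := fun i => w i) (fun a _ b _ hab => w.injective hab)
    set T := (S.image w).image τ.symm with hT
    have h2 : ∑ t ∈ T, vp (α (τ t)) = ∑ k ∈ S.image w, vp (α k) := by
      rw [hT, Finset.sum_image (fun a _ b _ hab => τ.symm.injective hab)]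
      exact Finset.sum_congr rfl fun k _ => by rw [Equiv.apply_symm_apply]
    have hTcard : T.card = m := by
      rw [hT, Finset.card_image_of_injective _ τ.symm.injective,
        Finset.card_image_of_injective _ w.injective, hS, aux_filter_card hm]
    rw [← h1, ← h2]
    exact aux_subset hm (fun t => vp (α (τ t))) (fun i j hij => hτ i j hij) T hTcard
  have hμD : μ D = ((∑ i : Fin n, vp (α i))
      + (1 / (e : ℚ)) * ∑ σ : Emb, ∑ i : Fin n, (hw i σ : ℚ)) / ((f : ℚ) * (n : ℚ)) := by
    rw [← hFilTop τ, hslope τ n hn le_rfl, hfilt]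
    congr 1
    rw [Finset.sum_add_distrib, hcuniv, Equiv.sum_comp τ (fun i => vp (α i))]
  have hD0 : μ D = 0 ↔ (∑ i : Fin n, vp (α i)
      = -(1 / (e : ℚ)) * ∑ σ : Emb, ∑ i : Fin n, (hw i σ : ℚ)) := by
    rw [hμD, div_eq_zero_iff]
    have hne : ((f : ℚ) * (n : ℚ)) ≠ 0 := (hfm n hn).ne'
    constructor
    · rintro (h | h)
      · linarith
      · exact absurd h hne
    · intro h
      left
      linarith
  have hYiff : (∀ Y ∈ SatSub D, 0 ≤ μ Y) ↔
      ∀ (w : Equiv.Perm (Fin n)) (m : ℕ), 1 ≤ m → m ≤ n →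
        0 ≤ ∑ i ∈ Finset.univ.filter (fun i : Fin n => (i : ℕ) < m),
          (vp (α (w i)) + (∑ σ : Emb, (hw i σ : ℚ)) / (e : ℚ)) := by
    constructor
    · intro H w m h1 h2
      have hmem : Filw w m ∈ SatSub D := (hsat _).mpr ⟨w, m, h1, h2, rfl⟩
      have := H _ hmem
      rw [hslope w m h1 h2] at this
      rcases div_nonneg_iff.mp this with ⟨ha, _⟩ | ⟨_, hb⟩
      · exact ha
      · exact absurd hb (not_le.mpr (hfm m h1))
    · intro H Y hY
      obtain ⟨w, m, h1, h2, rfl⟩ := (hsat Y).mp hY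
      rw [hslope w m h1 h2]
      exact div_nonneg (H w m h1 h2) (hfm m h1).le
  rw [hetale]
  constructor
  · rintro ⟨h0, hsub⟩
    refine ⟨?_, hD0.mp h0⟩
    intro j hj1 hj2
    have := (hYiff.mp hsub) τ j hj1 hj2.le
    rw [Finset.sum_add_distrib, hcsum j] at this
    linarith
  · rintro ⟨hineq, heq⟩
    refine ⟨hD0.mpr heq, hYiff.mpr ?_⟩
    intro w m h1 h2
    rw [Finset.sum_add_distrib]
    rcases eq_or_lt_of_le h2 with heqn | hlt
    · rw [heqn, hfilt]
      have hA : ∑ i : Fin n, vp (α (w i)) = ∑ i : Fin n, vp (α i) :=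
        Equiv.sum_comp w (fun i => vp (α i))
      rw [hA, hcuniv, heq]
      linarith
    · have h3 := hineq m h1 hlt
      have h4 := hkey w m h2
      rw [hcsum m]
      linarith
end

section
/- Let R be a commutative ring, R[[t]] the power series ring, and let N ⊆ M be finite projective R[[t]]-modules with tM ⊆ N ⊆ M and M/tM projective over R, N projective over R[[t]]. Then the R-modules N/tM and M/N are finite projective over R, and there are short exact sequences of R-modules 0 → tM/tN → N/tN → N/tM → 0 and 0 → N/tM → M/tM → M/N → 0. -/
/-- Multiplication of a submodule by the ideal `(t) = (X)` of `R[[t]]`. -/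
noncomputable def tmul {R : Type*} [CommRing R] {M : Type*} [AddCommGroup M]
    [Module (PowerSeries R) M] (P : Submodule (PowerSeries R) M) :
    Submodule (PowerSeries R) M :=
  Ideal.span {(PowerSeries.X : PowerSeries R)} • P

/-!
Write `t = X`. As `M` and `N` are `R⟦X⟧`-projective, `M/XM` and `N/XN` are `R`-projective and `X`
is a non-zero-divisor on `M`. Choose `R`-linear sections `s₀`, `s₁` of `M → M/XM` and `N → N/XN`,
and let `d : N/XN → M/XM` be induced by the inclusion. Then `q ↦ s₁ q - s₀ (d q)` lands in `XM`
and retracts `XM/XN ⊆ N/XN`, so `XM/XN ≅ M/N` (multiplication by `X`) is `R`-projective. Hence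
`0 → N/XM → M/XM → M/N → 0` splits, and `N/XM` is a direct summand of `M/XM`.
-/

section

open PowerSeries Pointwise Submodule

section Subquotient

variable {A W : Type*} [Ring A] [AddCommGroup W] [Module A W] {K L P : Submodule A W}

theorem Submodule.shortExact_mapQ_subtype_factor (hKL : K ≤ L) :
    Function.Injective (mapQ (K.comap L.subtype) K L.subtype le_rfl) ∧
      Function.Surjective (factor hKL) ∧
      Function.Exact (mapQ (K.comap L.subtype) K L.subtype le_rfl) (factor hKL) := by
  refine ⟨?_, factor_surjective hKL, ?_⟩
  · rw [← LinearMap.ker_eq_bot, ker_mapQ, mkQ_map_self]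
  · rw [LinearMap.exact_iff, ker_mapQ, range_mapQ, comap_id, range_subtype]

theorem Submodule.shortExact_mapQ_inclusion_factor (hKL : K ≤ L) (hLP : L ≤ P) :
    Function.Injective (mapQ (K.comap L.subtype) (K.comap P.subtype) (inclusion hLP)
        fun _ hx => hx) ∧
      Function.Surjective (factor (comap_mono (f := P.subtype) hKL)) ∧
      Function.Exact (mapQ (K.comap L.subtype) (K.comap P.subtype) (inclusion hLP)
        fun _ hx => hx) (factor (comap_mono (f := P.subtype) hKL)) := by
  refine ⟨?_, factor_surjective _, ?_⟩
  · exact LinearMap.ker_eq_bot.mp ((ker_mapQ _ _ _ _).trans (mkQ_map_self _))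
  · refine LinearMap.exact_iff.mpr
      ((ker_mapQ _ _ _ _).trans (Eq.trans ?_ (range_mapQ _ _ _ _).symm))
    rw [comap_id, range_inclusion]

end Subquotient

theorem Module.Projective.exists_retraction_of_exact {A M N P : Type*} [Ring A]
    [AddCommGroup M] [AddCommGroup N] [AddCommGroup P] [Module A M] [Module A N] [Module A P]
    [Module.Projective A P] {f : M →ₗ[A] N} {g : N →ₗ[A] P}
    (hf : Function.Injective f) (hg : Function.Surjective g) (hfg : Function.Exact f g) :
    ∃ r : N →ₗ[A] M, r ∘ₗ f = LinearMap.id := by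
  obtain ⟨l, hl⟩ := Module.projective_lifting_property g LinearMap.id hg
  let e := hfg.splitSurjectiveEquiv hf ⟨l, hl⟩
  refine ⟨LinearMap.fst A M P ∘ₗ e.1.toLinearMap, LinearMap.ext fun x => ?_⟩
  simp [LinearMap.congr_fun e.2.1 x]

variable {R : Type*} [CommRing R]

section tmul

variable {P : Type*} [AddCommGroup P] [Module R⟦X⟧ P]

theorem tmul_eq_X_smul (K : Submodule R⟦X⟧ P) : tmul K = (X : R⟦X⟧) • K :=
  ideal_span_singleton_smul _ _

theorem mem_tmul_iff {K : Submodule R⟦X⟧ P} {x : P} :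
    x ∈ tmul K ↔ ∃ y ∈ K, (X : R⟦X⟧) • y = x := by
  rw [tmul_eq_X_smul, mem_smul_pointwise_iff_exists]

theorem X_smul_mem_tmul {K : Submodule R⟦X⟧ P} {y : P} (hy : y ∈ K) : (X : R⟦X⟧) • y ∈ tmul K :=
  mem_tmul_iff.mpr ⟨y, hy, rfl⟩

theorem tmul_mono {K L : Submodule R⟦X⟧ P} (h : K ≤ L) : tmul K ≤ tmul L :=
  smul_mono_right _ h

theorem comap_subtype_tmul (K : Submodule R⟦X⟧ P) : (tmul K).comap K.subtype = tmul ⊤ := by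
  ext x
  simp only [mem_comap, subtype_apply, mem_tmul_iff, mem_top, true_and]
  constructor
  · rintro ⟨y, hy, hyx⟩
    exact ⟨⟨y, hy⟩, Subtype.ext hyx⟩
  · rintro ⟨y, rfl⟩
    exact ⟨y, y.2, rfl⟩

theorem X_smul_quotient_tmul_top_eq_zero (v : P ⧸ tmul (⊤ : Submodule R⟦X⟧ P)) :
    (X : R⟦X⟧) • v = 0 := by
  induction v using Quotient.induction_on with
  | H p => rw [← Quotient.mk_smul, Quotient.mk_eq_zero]; exact X_smul_mem_tmul mem_top

theorem isSMulRegular_X [Module.Flat R⟦X⟧ P] : IsSMulRegular P (X : R⟦X⟧) :=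
  Module.Flat.isSMulRegular_of_nonZeroDivisors
    (IsRegular.mem_nonZeroDivisors ⟨X_mul_injective, mul_X_injective⟩)

end tmul

section AnnihilatedByX

variable {V : Type*} [AddCommGroup V] [Module R⟦X⟧ V] [Module R V] [IsScalarTower R R⟦X⟧ V]

theorem smul_eq_constantCoeff_smul (hV : ∀ v : V, (X : R⟦X⟧) • v = 0) (f : R⟦X⟧) (v : V) :
    f • v = constantCoeff f • v := by
  conv_lhs => rw [eq_X_mul_shift_add_const f]
  rw [add_smul, mul_smul, hV, zero_add, ← algebraMap_eq, algebraMap_smul]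

theorem Module.Finite.of_X_smul_eq_zero [Module.Finite R⟦X⟧ V]
    (hV : ∀ v : V, (X : R⟦X⟧) • v = 0) : Module.Finite R V := by
  obtain ⟨s, hs⟩ := Module.finite_def.mp ‹Module.Finite R⟦X⟧ V›
  let spanR : Submodule R⟦X⟧ V :=
    { span R (s : Set V) with
      smul_mem' f v hv := by
        rw [smul_eq_constantCoeff_smul hV]
        exact Submodule.smul_mem _ _ hv }
  refine ⟨s, eq_top_iff.mpr fun v _ => ?_⟩
  have : span R⟦X⟧ (s : Set V) ≤ spanR := span_le.mpr subset_span
  exact this (hs ▸ mem_top)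

end AnnihilatedByX

theorem Module.Projective.quotient_tmul_top {P : Type*} [AddCommGroup P] [Module R⟦X⟧ P]
    [Module R P] [IsScalarTower R R⟦X⟧ P] [Module.Projective R⟦X⟧ P] :
    Module.Projective R (P ⧸ tmul (⊤ : Submodule R⟦X⟧ P)) := by
  -- `P / XP` is a retract of `(P →₀ R⟦X⟧) / X ≅ P →₀ R`
  obtain ⟨s, hs⟩ := Module.projective_def.mp ‹Module.Projective R⟦X⟧ P›
  set T := tmul (⊤ : Submodule R⟦X⟧ P)
  let reduce : (P →₀ R⟦X⟧) →ₗ[R] (P →₀ R) := Finsupp.mapRange.linearMap (coeff 0)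
  have reduce_X_smul (l : P →₀ R⟦X⟧) : reduce ((X : R⟦X⟧) • l) = 0 := by
    ext a
    simp [reduce]
  let ψ : (P →₀ R) →ₗ[R] P ⧸ T := Finsupp.linearCombination R T.mkQ
  have ψ_reduce :
      ψ ∘ₗ reduce = (T.mkQ ∘ₗ Finsupp.linearCombination R⟦X⟧ id).restrictScalars R :=
    Finsupp.lhom_ext fun p f => by
      simp [reduce, ψ,
        smul_eq_constantCoeff_smul (V := P ⧸ T) X_smul_quotient_tmul_top_eq_zero f]
  have hker : T.restrictScalars R ≤ LinearMap.ker (reduce ∘ₗ s.restrictScalars R) := by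
    intro x hx
    obtain ⟨y, -, rfl⟩ := mem_tmul_iff.mp hx
    simp [reduce_X_smul]
  let φ : P ⧸ T →ₗ[R] (P →₀ R) :=
    (T.restrictScalars R).liftQ _ hker ∘ₗ (Quotient.restrictScalarsEquiv R T).symm.toLinearMap
  refine .of_split φ ψ (LinearMap.ext fun q => Quotient.induction_on _ q fun p => ?_)
  have := LinearMap.congr_fun ψ_reduce (s p)
  simp only [LinearMap.comp_apply, LinearMap.restrictScalars_apply, hs p] at this
  simpa [φ] using this

theorem Module.Projective.quotient_comap_subtype_tmul {M : Type*} [AddCommGroup M]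
    [Module R⟦X⟧ M] [Module R M] [IsScalarTower R R⟦X⟧ M] (N : Submodule R⟦X⟧ M)
    [Module.Projective R⟦X⟧ N] : Module.Projective R (↥N ⧸ (tmul N).comap N.subtype) :=
  comap_subtype_tmul N ▸ quotient_tmul_top

section Lattice

variable {M : Type*} [AddCommGroup M] [Module R⟦X⟧ M]

theorem X_smul_mem_tmul_iff (hM : IsSMulRegular M (X : R⟦X⟧)) {N : Submodule R⟦X⟧ M} {m : M} :
    (X : R⟦X⟧) • m ∈ tmul N ↔ m ∈ N := by
  refine ⟨fun h => ?_, X_smul_mem_tmul⟩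
  obtain ⟨y, hy, hym⟩ := mem_tmul_iff.mp h
  exact hM hym ▸ hy

noncomputable def quotientEquivTmulQuotient (hM : IsSMulRegular M (X : R⟦X⟧))
    (N : Submodule R⟦X⟧ M) :
    (M ⧸ N) ≃ₗ[R⟦X⟧] ↥(tmul (⊤ : Submodule R⟦X⟧ M)) ⧸ (tmul N).comap (tmul ⊤).subtype :=
  LinearEquiv.ofBijective
    (N.mapQ ((tmul N).comap (tmul ⊤).subtype)
      ((LinearMap.lsmul R⟦X⟧ M X).codRestrict (tmul ⊤) fun m =>
        X_smul_mem_tmul (y := m) mem_top)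
      fun m hm => X_smul_mem_tmul (y := m) hm)
    ⟨LinearMap.ker_eq_bot.mp <| (ker_mapQ _ _ _ _).trans <| by
        convert mkQ_map_self N
        ext m
        exact X_smul_mem_tmul_iff hM,
      fun q => by
        obtain ⟨⟨x, hx⟩, rfl⟩ := mkQ_surjective _ q
        obtain ⟨m, -, rfl⟩ := mem_tmul_iff.mp hx
        exact ⟨N.mkQ m, rfl⟩⟩

variable [Module R M] [IsScalarTower R R⟦X⟧ M] {N : Submodule R⟦X⟧ M}

theorem exists_retraction_mapQ_inclusion [Module.Projective R⟦X⟧ M]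
    [Module.Projective R⟦X⟧ N] (htMN : tmul (⊤ : Submodule R⟦X⟧ M) ≤ N) :
    ∃ ρ : (↥N ⧸ (tmul N).comap N.subtype) →ₗ[R]
        (↥(tmul (⊤ : Submodule R⟦X⟧ M)) ⧸ (tmul N).comap (tmul ⊤).subtype),
      ρ ∘ₗ (mapQ _ _ (inclusion htMN) fun _ hx => hx).restrictScalars R = LinearMap.id := by
  set tM := tmul (⊤ : Submodule R⟦X⟧ M)
  have : Module.Projective R (M ⧸ tM) := Module.Projective.quotient_tmul_top
  have := Module.Projective.quotient_comap_subtype_tmul (R := R) N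
  obtain ⟨s₀, hs₀⟩ := Module.projective_lifting_property
    (tM.mkQ.restrictScalars R) (LinearMap.id : M ⧸ tM →ₗ[R] M ⧸ tM) (mkQ_surjective tM)
  set tN := (tmul N).comap N.subtype
  obtain ⟨s₁, hs₁⟩ := Module.projective_lifting_property
    (tN.mkQ.restrictScalars R) (LinearMap.id : ↥N ⧸ tN →ₗ[R] ↥N ⧸ tN) (mkQ_surjective tN)
  let d : (↥N ⧸ tN) →ₗ[R⟦X⟧] M ⧸ tM := mapQ _ _ N.subtype fun _ hx => tmul_mono le_top hx
  let lift := N.subtype.restrictScalars R ∘ₗ s₁ - s₀ ∘ₗ d.restrictScalars R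
  have hs₀' (q) : tM.mkQ (s₀ q) = q := LinearMap.congr_fun hs₀ q
  have hs₁' (q) : tN.mkQ (s₁ q) = q := LinearMap.congr_fun hs₁ q
  have lift_mem (q) : lift q ∈ tM := by
    rw [← Quotient.mk_eq_zero]
    change tM.mkQ ((s₁ q : M) - s₀ (d q)) = 0
    rw [map_sub, hs₀', show tM.mkQ (s₁ q : M) = d q from congrArg d (hs₁' q), sub_self]
  refine ⟨((tmul N).comap tM.subtype).mkQ.restrictScalars R ∘ₗ
    lift.codRestrict (tM.restrictScalars R) lift_mem, ?_⟩
  refine LinearMap.ext fun q => Quotient.induction_on _ q fun x => ?_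
  set q₁ := tN.mkQ (inclusion htMN x)
  have hdq : d q₁ = 0 := (Quotient.mk_eq_zero tM).mpr x.2
  have hsq : (s₁ q₁ : M) - x ∈ tmul N := (Submodule.Quotient.eq tN).mp (hs₁' q₁)
  change ((tmul N).comap tM.subtype).mkQ ⟨(s₁ q₁ : M) - s₀ (d q₁), _⟩ = _
  simp only [hdq, map_zero, sub_zero]
  exact (Submodule.Quotient.eq _).mpr hsq

theorem Module.Projective.tmul_top_quotient {M : Type*} [AddCommGroup M] [Module R⟦X⟧ M]
    [Module R M] [IsScalarTower R R⟦X⟧ M] [Module.Projective R⟦X⟧ M] {N : Submodule R⟦X⟧ M}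
    [Module.Projective R⟦X⟧ N] (htMN : tmul (⊤ : Submodule R⟦X⟧ M) ≤ N) :
    Module.Projective R
      (↥(tmul (⊤ : Submodule R⟦X⟧ M)) ⧸ (tmul N).comap (tmul ⊤).subtype) := by
  have := Module.Projective.quotient_comap_subtype_tmul (R := R) N
  obtain ⟨ρ, hρ⟩ := exists_retraction_mapQ_inclusion htMN
  exact .of_split _ ρ hρ

end Lattice

end

theorem stmt17_general {R : Type*} [CommRing R] {M : Type*} [AddCommGroup M]
    [Module (PowerSeries R) M] [Module R M] [IsScalarTower R (PowerSeries R) M]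
    [Module.Finite (PowerSeries R) M] [Module.Projective (PowerSeries R) M]
    (N : Submodule (PowerSeries R) M)
    [Module.Projective (PowerSeries R) N]
    (htMN : tmul (⊤ : Submodule (PowerSeries R) M) ≤ N) :
    (Module.Finite R
        (↥N ⧸ (tmul (⊤ : Submodule (PowerSeries R) M)).comap N.subtype) ∧
      Module.Projective R
        (↥N ⧸ (tmul (⊤ : Submodule (PowerSeries R) M)).comap N.subtype)) ∧
    (Module.Finite R (M ⧸ N) ∧ Module.Projective R (M ⧸ N)) ∧
    (∃ (f : (↥(tmul (⊤ : Submodule (PowerSeries R) M)) ⧸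
            (tmul N).comap (tmul (⊤ : Submodule (PowerSeries R) M)).subtype) →ₗ[PowerSeries R]
            (↥N ⧸ (tmul N).comap N.subtype))
        (g : (↥N ⧸ (tmul N).comap N.subtype) →ₗ[PowerSeries R]
            (↥N ⧸ (tmul (⊤ : Submodule (PowerSeries R) M)).comap N.subtype)),
      Function.Injective f ∧ Function.Surjective g ∧ Function.Exact f g ∧
      (∀ x : ↥(tmul (⊤ : Submodule (PowerSeries R) M)),
        f (Submodule.Quotient.mk x) =
          Submodule.Quotient.mk (⟨(x : M), htMN x.2⟩ : ↥N)) ∧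
      (∀ x : ↥N, g (Submodule.Quotient.mk x) = Submodule.Quotient.mk x)) ∧
    (∃ (f₂ : (↥N ⧸ (tmul (⊤ : Submodule (PowerSeries R) M)).comap N.subtype) →ₗ[PowerSeries R]
            (M ⧸ tmul (⊤ : Submodule (PowerSeries R) M)))
        (g₂ : (M ⧸ tmul (⊤ : Submodule (PowerSeries R) M)) →ₗ[PowerSeries R] (M ⧸ N)),
      Function.Injective f₂ ∧ Function.Surjective g₂ ∧ Function.Exact f₂ g₂ ∧
      (∀ x : ↥N, f₂ (Submodule.Quotient.mk x) = Submodule.Quotient.mk (x : M)) ∧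
      (∀ m : M, g₂ (Submodule.Quotient.mk m) = Submodule.Quotient.mk m)) := by
  set tM := tmul (⊤ : Submodule (PowerSeries R) M)
  have : Module.Projective R (M ⧸ tM) := Module.Projective.quotient_tmul_top
  have : Module.Finite R (M ⧸ tM) := .of_X_smul_eq_zero X_smul_quotient_tmul_top_eq_zero
  have hB : Module.Projective R (M ⧸ N) :=
    have := Module.Projective.tmul_top_quotient htMN
    .of_equiv ((quotientEquivTmulQuotient isSMulRegular_X N).symm.restrictScalars R)
  obtain ⟨inj₁, surj₁, exact₁⟩ :=
    Submodule.shortExact_mapQ_inclusion_factor (tmul_mono (le_top : N ≤ ⊤)) htMN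
  obtain ⟨inj₂, surj₂, exact₂⟩ := Submodule.shortExact_mapQ_subtype_factor htMN
  obtain ⟨r, hr⟩ := Module.Projective.exists_retraction_of_exact
    (f := (Submodule.mapQ _ _ N.subtype fun _ hx => hx).restrictScalars R)
    (g := (Submodule.factor htMN).restrictScalars R) inj₂ surj₂ exact₂
  refine ⟨⟨.of_surjective r fun a => ⟨_, LinearMap.congr_fun hr a⟩, .of_split _ r hr⟩,
    ⟨.of_surjective ((Submodule.factor htMN).restrictScalars R) surj₂, hB⟩,
    ⟨_, _, inj₁, surj₁, exact₁, fun _ => rfl, fun _ => rfl⟩,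
    ⟨_, _, inj₂, surj₂, exact₂, fun _ => rfl, fun _ => rfl⟩⟩

/-- Let `R` be a commutative ring, `R[[t]]` the power series ring, and
`N ⊆ M` finite projective `R[[t]]`-modules with `tM ⊆ N ⊆ M`, such that `M/tM` is
projective over `R` and `N` is projective over `R[[t]]`.  Then the `R`-modules `N/tM`
and `M/N` are finite projective over `R`, and there are short exact sequences
`0 → tM/tN → N/tN → N/tM → 0` and `0 → N/tM → M/tM → M/N → 0` (given by the canonical
inclusions and projections). -/
theorem stmt17 {R : Type*} [CommRing R] {M : Type*} [AddCommGroup M]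
    [Module (PowerSeries R) M] [Module R M] [IsScalarTower R (PowerSeries R) M]
    [Module.Finite (PowerSeries R) M] [Module.Projective (PowerSeries R) M]
    (N : Submodule (PowerSeries R) M)
    [Module.Finite (PowerSeries R) N] [Module.Projective (PowerSeries R) N]
    (htMN : tmul (⊤ : Submodule (PowerSeries R) M) ≤ N)
    (hMt : Module.Projective R (M ⧸ tmul (⊤ : Submodule (PowerSeries R) M))) :
    (Module.Finite R
        (↥N ⧸ (tmul (⊤ : Submodule (PowerSeries R) M)).comap N.subtype) ∧
      Module.Projective R
        (↥N ⧸ (tmul (⊤ : Submodule (PowerSeries R) M)).comap N.subtype)) ∧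
    (Module.Finite R (M ⧸ N) ∧ Module.Projective R (M ⧸ N)) ∧
    (∃ (f : (↥(tmul (⊤ : Submodule (PowerSeries R) M)) ⧸
            (tmul N).comap (tmul (⊤ : Submodule (PowerSeries R) M)).subtype) →ₗ[PowerSeries R]
            (↥N ⧸ (tmul N).comap N.subtype))
        (g : (↥N ⧸ (tmul N).comap N.subtype) →ₗ[PowerSeries R]
            (↥N ⧸ (tmul (⊤ : Submodule (PowerSeries R) M)).comap N.subtype)),
      Function.Injective f ∧ Function.Surjective g ∧ Function.Exact f g ∧
      (∀ x : ↥(tmul (⊤ : Submodule (PowerSeries R) M)),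
        f (Submodule.Quotient.mk x) =
          Submodule.Quotient.mk (⟨(x : M), htMN x.2⟩ : ↥N)) ∧
      (∀ x : ↥N, g (Submodule.Quotient.mk x) = Submodule.Quotient.mk x)) ∧
    (∃ (f₂ : (↥N ⧸ (tmul (⊤ : Submodule (PowerSeries R) M)).comap N.subtype) →ₗ[PowerSeries R]
            (M ⧸ tmul (⊤ : Submodule (PowerSeries R) M)))
        (g₂ : (M ⧸ tmul (⊤ : Submodule (PowerSeries R) M)) →ₗ[PowerSeries R] (M ⧸ N)),
      Function.Injective f₂ ∧ Function.Surjective g₂ ∧ Function.Exact f₂ g₂ ∧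
      (∀ x : ↥N, f₂ (Submodule.Quotient.mk x) = Submodule.Quotient.mk (x : M)) ∧
      (∀ m : M, g₂ (Submodule.Quotient.mk m) = Submodule.Quotient.mk m)) :=
  stmt17_general N htMN
end
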